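/- arXiv:1908.06207 — 9 statements merged into one kernel-verified Lean document; each statement's English description precedes it below -/
import Mathlib

section
/- Let 0 ≤ η < 1/2, v ∈ (0, v₀) where v₀ = √(−G(√(η²+2)−3η)), and let y(v) be the smallest positive root of G(z) + v² = 0, where G(z) = (1/4)z⁴ + 2ηz³ + 4η²z² − z². Then y(v) ≥ v. -/
lemma neg_quartic_le_sq {η z : ℝ} (hη : 0 ≤ η) (hz : 0 ≤ z) :
    -((1/4) * z^4 + 2*η*z^3 + 4*η^2*z^2 - z^2) ≤ z^2 := by
  have : 0 ≤ (1/4) * z^4 + 2*η*z^3 + 4*η^2*z^2 := by positivity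
  linarith

theorem yv_ge_v_general (η : ℝ) (hη0 : 0 ≤ η)
    (G : ℝ → ℝ) (hG : ∀ z, G z = (1/4) * z^4 + 2*η*z^3 + 4*η^2*z^2 - z^2)
    (v₀ : ℝ)
    (v : ℝ) (hv : v ∈ Set.Ioo 0 v₀)
    (yv : ℝ) (hyv : IsLeast {z : ℝ | 0 < z ∧ G z + v^2 = 0} yv) :
    yv ≥ v := by
  obtain ⟨⟨hy0, hroot⟩, -⟩ := hyv
  have hsq : v^2 ≤ yv^2 := by
    have := neg_quartic_le_sq hη0 hy0.le
    rw [hG] at hroot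
    linarith
  exact (pow_le_pow_iff_left₀ hv.1.le hy0.le two_ne_zero).mp hsq

theorem yv_ge_v (η : ℝ) (hη0 : 0 ≤ η) (hη : η < 1/2)
    (G : ℝ → ℝ) (hG : ∀ z, G z = (1/4) * z^4 + 2*η*z^3 + 4*η^2*z^2 - z^2)
    (v₀ : ℝ) (hv₀ : v₀ = Real.sqrt (-(G (Real.sqrt (η^2 + 2) - 3*η))))
    (v : ℝ) (hv : v ∈ Set.Ioo 0 v₀)
    (yv : ℝ) (hyv : IsLeast {z : ℝ | 0 < z ∧ G z + v^2 = 0} yv) :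
    yv ≥ v :=
  yv_ge_v_general η hη0 G hG v₀ v hv yv hyv
end

section
/- Let 0 ≤ η < 1/2 and G(z) = (1/4)z⁴ + 2ηz³ + 4η²z² − z². If v ∈ (0, v₀) with v₀ = √(−G(√(η²+2)−3η)) and y(v) is the smallest positive root of G(z) + v² = 0, then G'(y(v))·y(v) + 2v² = (1/2)y(v)⁴ + 2η·y(v)³ > 0. -/
/-! Since `z G'(z) - 2 G(z) = z⁴/2 + 2η z³` (the quadratic terms cancel) and `G(y) = -v²` at a
root `y`, the left-hand side equals `y⁴/2 + 2η y³`, which is positive for `y > 0` and `η ≥ 0`. -/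

lemma hasDerivAt_quartic (η z : ℝ) :
    HasDerivAt (fun z : ℝ => (1/4) * z^4 + 2*η*z^3 + 4*η^2*z^2 - z^2)
      (z^3 + 6*η*z^2 + 8*η^2*z - 2*z) z := by
  have h4 := (hasDerivAt_pow 4 z).const_mul ((1:ℝ)/4)
  have h3 := (hasDerivAt_pow 3 z).const_mul (2*η)
  have h2 := (hasDerivAt_pow 2 z).const_mul (4*η^2)
  exact (((h4.add h3).add h2).sub (hasDerivAt_pow 2 z)).congr_deriv (by norm_num; ring)

lemma deriv_mul_self_sub_two_mul_eq {η : ℝ} {G : ℝ → ℝ}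
    (hG : ∀ z, G z = (1/4) * z^4 + 2*η*z^3 + 4*η^2*z^2 - z^2) (z : ℝ) :
    deriv G z * z - 2 * G z = (1/2) * z^4 + 2*η*z^3 := by
  rw [funext hG, (hasDerivAt_quartic η z).deriv]
  ring

theorem deriv_at_yv_identity_general (η : ℝ) (hη0 : 0 ≤ η)
    (G : ℝ → ℝ) (hG : ∀ z, G z = (1/4) * z^4 + 2*η*z^3 + 4*η^2*z^2 - z^2)
    (v : ℝ)
    (yv : ℝ) (hyv : IsLeast {z : ℝ | 0 < z ∧ G z + v^2 = 0} yv) :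
    deriv G yv * yv + 2*v^2 = (1/2) * yv^4 + 2*η*yv^3 ∧
      (0 : ℝ) < (1/2) * yv^4 + 2*η*yv^3 := by
  obtain ⟨⟨hyv_pos, hroot⟩, -⟩ := hyv
  have heuler := deriv_mul_self_sub_two_mul_eq hG yv
  exact ⟨by linarith, by positivity⟩

theorem deriv_at_yv_identity (η : ℝ) (hη0 : 0 ≤ η) (hη : η < 1/2)
    (G : ℝ → ℝ) (hG : ∀ z, G z = (1/4) * z^4 + 2*η*z^3 + 4*η^2*z^2 - z^2)
    (v₀ : ℝ) (hv₀ : v₀ = Real.sqrt (-(G (Real.sqrt (η^2 + 2) - 3*η))))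
    (v : ℝ) (hv : v ∈ Set.Ioo 0 v₀)
    (yv : ℝ) (hyv : IsLeast {z : ℝ | 0 < z ∧ G z + v^2 = 0} yv) :
    deriv G yv * yv + 2*v^2 = (1/2) * yv^4 + 2*η*yv^3 ∧
      (0 : ℝ) < (1/2) * yv^4 + 2*η*yv^3 :=
  deriv_at_yv_identity_general η hη0 G hG v yv hyv
end

section
/- Let 0 ≤ η < 1/2, G(z) = (1/4)z⁴ + 2ηz³ + 4η²z² − z², v₀ = √(−G(√(η²+2)−3η)), and for v ∈ (0, v₀) let y(v) be the smallest positive root of G(z) + v² = 0. Then the map v ↦ v / y(v) is non-increasing on (0, v₀). -/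
/-!
Writing `G z + v² = 0` as `(v / z)² = 1 - 4η² - 2ηz - z²/4`, the ratio `v / y(v)` is the
square root of a function that decreases in `z > 0` when `η ≥ 0`. It therefore suffices that
`y` is nondecreasing in `v`, which follows from the intermediate value theorem on `[0, y(v₂)]`,
since `G 0 = 0`.
-/

open Set

theorem IsLeast.le_of_continuous_of_le {f : ℝ → ℝ} (hf : Continuous f) (hf0 : f 0 = 0)
    {c₁ c₂ y₁ y₂ : ℝ} (hc₁ : 0 < c₁) (hc : c₁ ≤ c₂)
    (hy₁ : IsLeast {z : ℝ | 0 < z ∧ f z + c₁ = 0} y₁) (hy₂ : 0 ≤ y₂) (hroot₂ : f y₂ + c₂ = 0) :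
    y₁ ≤ y₂ := by
  have hlevel : c₁ ∈ Icc ((-f) 0) ((-f) y₂) := by
    rw [Pi.neg_apply, Pi.neg_apply, hf0, neg_zero]
    exact ⟨hc₁.le, by linarith⟩
  obtain ⟨z, ⟨hz0, hzy⟩, hfz⟩ := intermediate_value_Icc hy₂ hf.neg.continuousOn hlevel
  have hzpos : 0 < z := hz0.lt_of_ne <| by
    rintro rfl
    rw [Pi.neg_apply, hf0, neg_zero] at hfz
    exact hc₁.ne hfz
  exact (hy₁.2 ⟨hzpos, by rw [Pi.neg_apply] at hfz; linarith⟩).trans hzy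

theorem sq_div_eq_of_quartic_root {η v y : ℝ} (hy : y ≠ 0)
    (hroot : (1/4) * y^4 + 2*η*y^3 + 4*η^2*y^2 - y^2 + v^2 = 0) :
    (v / y)^2 = 1 - 4*η^2 - 2*η*y - y^2/4 := by
  rw [div_pow, div_eq_iff (pow_ne_zero 2 hy)]
  linear_combination hroot

theorem antitoneOn_quartic_ratio {η : ℝ} (hη : 0 ≤ η) :
    AntitoneOn (fun y : ℝ => 1 - 4*η^2 - 2*η*y - y^2/4) (Ici 0) := by
  intro a ha b _ hab
  simp only [mem_Ici] at ha
  nlinarith [mul_le_mul_of_nonneg_left hab hη]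

theorem v_div_yv_antitone_general (η : ℝ) (hη0 : 0 ≤ η)
    (G : ℝ → ℝ) (hG : ∀ z, G z = (1/4) * z^4 + 2*η*z^3 + 4*η^2*z^2 - z^2)
    (v₀ : ℝ)
    (yf : ℝ → ℝ)
    (hyf : ∀ v ∈ Set.Ioo (0:ℝ) v₀, IsLeast {z : ℝ | 0 < z ∧ G z + v^2 = 0} (yf v)) :
    AntitoneOn (fun v => v / yf v) (Set.Ioo (0:ℝ) v₀) := by
  intro v₁ hv₁ v₂ hv₂ hle
  obtain ⟨⟨hy₁, hroot₁⟩, -⟩ := hyf v₁ hv₁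
  obtain ⟨⟨hy₂, hroot₂⟩, -⟩ := hyf v₂ hv₂
  have hcont : Continuous G := by
    rw [show G = _ from funext hG]
    fun_prop
  have hy : yf v₁ ≤ yf v₂ :=
    (hyf v₁ hv₁).le_of_continuous_of_le hcont (by simp [hG]) (pow_pos hv₁.1 2)
      (pow_le_pow_left₀ hv₁.1.le hle 2) hy₂.le hroot₂
  have hsq : (v₂ / yf v₂)^2 ≤ (v₁ / yf v₁)^2 := by
    rw [sq_div_eq_of_quartic_root hy₁.ne' (hG _ ▸ hroot₁),
      sq_div_eq_of_quartic_root hy₂.ne' (hG _ ▸ hroot₂)]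
    exact antitoneOn_quartic_ratio hη0 (mem_Ici.2 hy₁.le) (mem_Ici.2 hy₂.le) hy
  exact (pow_le_pow_iff_left₀ (div_pos hv₂.1 hy₂).le (div_pos hv₁.1 hy₁).le two_ne_zero).1 hsq

theorem v_div_yv_antitone (η : ℝ) (hη0 : 0 ≤ η) (hη : η < 1/2)
    (G : ℝ → ℝ) (hG : ∀ z, G z = (1/4) * z^4 + 2*η*z^3 + 4*η^2*z^2 - z^2)
    (v₀ : ℝ) (hv₀ : v₀ = Real.sqrt (-(G (Real.sqrt (η^2 + 2) - 3*η))))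
    (yf : ℝ → ℝ)
    (hyf : ∀ v ∈ Set.Ioo (0:ℝ) v₀, IsLeast {z : ℝ | 0 < z ∧ G z + v^2 = 0} (yf v)) :
    AntitoneOn (fun v => v / yf v) (Set.Ioo (0:ℝ) v₀) :=
  v_div_yv_antitone_general η hη0 G hG v₀ yf hyf
end

section
/- Let 0 ≤ η < 1/2, G(z) = (1/4)z⁴ + 2ηz³ + 4η²z² − z², v₀ = √(−G(√(η²+2)−3η)). For v ∈ (0, v₀) define T(v) = ∫₀^{y(v)} dz/√(G(z)+v²), where y(v) is the smallest positive root of G(z)+v² = 0. Then T is strictly increasing on (0, v₀). -/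
set_option maxHeartbeats 1000000
open MeasureTheory intervalIntegral Set


private lemma Ganti (η : ℝ) (hη0 : 0 ≤ η) (hη : η < 1/2) :
    StrictAntiOn (fun z : ℝ => (1/4)*z^4 + 2*η*z^3 + 4*η^2*z^2 - z^2)
      (Set.Icc 0 (Real.sqrt (η^2+2) - 3*η)) := by
  have hs2 : (Real.sqrt (η^2+2))^2 = η^2+2 := Real.sq_sqrt (by positivity)
  have hs0 : 0 < Real.sqrt (η^2+2) := Real.sqrt_pos.mpr (by positivity)
  have hderiv : ∀ z : ℝ, HasDerivAt (fun z : ℝ => (1/4)*z^4 + 2*η*z^3 + 4*η^2*z^2 - z^2)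
      (z*(z^2 + 6*η*z + 8*η^2 - 2)) z := by
    intro z
    have h := ((((hasDerivAt_pow 4 z).const_mul ((1:ℝ)/4)).add
      ((hasDerivAt_pow 3 z).const_mul (2*η))).add
      ((hasDerivAt_pow 2 z).const_mul (4*η^2))).sub (hasDerivAt_pow 2 z)
    refine h.congr_deriv ?_
    push_cast; ring
  apply strictAntiOn_of_deriv_neg (convex_Icc _ _) (Continuous.continuousOn (by continuity))
  intro x hx
  rw [interior_Icc] at hx
  rw [(hderiv x).deriv]
  have hroot : (Real.sqrt (η^2+2) - 3*η)^2 + 6*η*(Real.sqrt (η^2+2) - 3*η) + 8*η^2 - 2 = 0 := by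
    linear_combination hs2
  have hx1 : x^2 + 6*η*x + 8*η^2 - 2 < 0 := by nlinarith [hx.1, hx.2, mul_nonneg hη0 hx.1.le]
  exact mul_neg_of_pos_of_neg hx.1 hx1

private lemma Taux (η : ℝ) (hη0 : 0 ≤ η) (hη : η < 1/2) (v y : ℝ)
    (hv : 0 < v) (hy0 : 0 < y)
    (hanti : StrictAntiOn (fun z : ℝ => (1/4)*z^4 + 2*η*z^3 + 4*η^2*z^2 - z^2)
      (Set.Icc 0 (Real.sqrt (η^2+2) - 3*η)))
    (hyzs : y < Real.sqrt (η^2+2) - 3*η)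
    (hGy : (1/4)*y^4 + 2*η*y^3 + 4*η^2*y^2 - y^2 = -v^2) :
    IntervalIntegrable (fun s => y * (1 / Real.sqrt ((1/4)*(y*s)^4 + 2*η*(y*s)^3 + 4*η^2*(y*s)^2 - (y*s)^2 + v^2))) MeasureTheory.volume 0 1
    ∧ (∫ z in (0:ℝ)..y, 1 / Real.sqrt ((1/4)*z^4 + 2*η*z^3 + 4*η^2*z^2 - z^2 + v^2))
      = ∫ s in (0:ℝ)..1, y * (1 / Real.sqrt ((1/4)*(y*s)^4 + 2*η*(y*s)^3 + 4*η^2*(y*s)^2 - (y*s)^2 + v^2))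
    ∧ ∀ s ∈ Set.Ioo (0:ℝ) 1,
        0 < (1/4)*y^2*(s^4-1) + 2*η*y*(s^3-1) + (4*η^2-1)*(s^2-1)
        ∧ y * (1 / Real.sqrt ((1/4)*(y*s)^4 + 2*η*(y*s)^3 + 4*η^2*(y*s)^2 - (y*s)^2 + v^2))
          = 1 / Real.sqrt ((1/4)*y^2*(s^4-1) + 2*η*y*(s^3-1) + (4*η^2-1)*(s^2-1)) := by
  have hymem : y ∈ Set.Icc 0 (Real.sqrt (η^2+2) - 3*η) := ⟨hy0.le, hyzs.le⟩
  -- positivity of E s := G(ys)+v² for s ∈ [0,1)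
  have hE : ∀ s : ℝ, 0 ≤ s → s < 1 →
      0 < (1/4)*(y*s)^4 + 2*η*(y*s)^3 + 4*η^2*(y*s)^2 - (y*s)^2 + v^2 := by
    intro s hs0 hs1
    have hys : y*s ∈ Set.Icc 0 (Real.sqrt (η^2+2) - 3*η) := by
      constructor
      · positivity
      · nlinarith
    have hlt : y*s < y := by nlinarith
    have := hanti hys hymem hlt
    simp only at this
    linarith
  -- Q polynomial and its positivity on [0,y]
  set Q : ℝ → ℝ := fun z => -((1/4)*(z+y)*(z^2+y^2) + 2*η*(z^2+z*y+y^2) + (4*η^2-1)*(z+y)) with hQ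
  have hQid : ∀ z : ℝ, ((1/4)*z^4 + 2*η*z^3 + 4*η^2*z^2 - z^2) - ((1/4)*y^4 + 2*η*y^3 + 4*η^2*y^2 - y^2) = (y - z) * Q z := by
    intro z; simp only [hQ]; ring
  have hs2 : (Real.sqrt (η^2+2))^2 = η^2+2 := Real.sq_sqrt (by positivity)
  have hQpos : ∀ z ∈ Set.Icc 0 y, 0 < Q z := by
    intro z hz
    rcases lt_or_eq_of_le hz.2 with hzy | hzy
    · have hzmem : z ∈ Set.Icc 0 (Real.sqrt (η^2+2) - 3*η) := ⟨hz.1, by linarith⟩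
      have h1 := hanti hzmem hymem hzy
      simp only at h1
      have h2 : 0 < (y - z) * Q z := by rw [← hQid z]; linarith
      by_contra h
      push_neg at h
      nlinarith
    · subst hzy
      have hroot : (Real.sqrt (η^2+2) - 3*η)^2 + 6*η*(Real.sqrt (η^2+2) - 3*η) + 8*η^2 - 2 = 0 := by
        linear_combination hs2
      have hz1 : z^2 + 6*η*z + 8*η^2 - 2 < 0 := by nlinarith [mul_nonneg hη0 hz.1]
      have : Q z = -(z*(z^2 + 6*η*z + 8*η^2 - 2)) := by simp only [hQ]; ring
      rw [this]
      have h0z : 0 < z := hy0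
      nlinarith
  -- minimum of Q on [0,y]
  obtain ⟨z₀, hz₀mem, hz₀min⟩ := isCompact_Icc.exists_isMinOn (Set.nonempty_Icc.mpr hy0.le)
    (Continuous.continuousOn (by simp only [hQ]; fun_prop) : ContinuousOn Q (Set.Icc 0 y))
  set c := Q z₀ with hc
  have hc0 : 0 < c := hQpos z₀ hz₀mem
  -- integrability
  have hint : IntervalIntegrable (fun s => y * (1 / Real.sqrt ((1/4)*(y*s)^4 + 2*η*(y*s)^3 + 4*η^2*(y*s)^2 - (y*s)^2 + v^2))) MeasureTheory.volume 0 1 := by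
    set K := y / Real.sqrt (y*c) with hK
    have hmaj : IntervalIntegrable (fun x : ℝ => K * (1-x) ^ (-(1/2) : ℝ)) MeasureTheory.volume 0 1 := by
      have h1 : IntervalIntegrable (fun x : ℝ => x ^ (-(1/2):ℝ)) MeasureTheory.volume 0 1 :=
        intervalIntegrable_rpow' (by norm_num)
      have h2 := (h1.comp_sub_left 1).symm
      norm_num at h2
      exact h2.const_mul K
    apply hmaj.mono_fun
    · apply Measurable.aestronglyMeasurable
      apply Measurable.mul measurable_const
      apply Measurable.div measurable_const
      have hcont : Continuous fun s : ℝ => (1/4)*(y*s)^4 + 2*η*(y*s)^3 + 4*η^2*(y*s)^2 - (y*s)^2 + v^2 := by fun_prop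
      exact Real.continuous_sqrt.measurable.comp hcont.measurable
    · rw [Set.uIoc_of_le (by norm_num : (0:ℝ) ≤ 1)]
      refine (ae_restrict_iff' measurableSet_Ioc).mpr (Filter.Eventually.of_forall ?_)
      intro s hs
      dsimp only
      have hs0' : 0 < s := hs.1
      rcases eq_or_lt_of_le hs.2 with hs1 | hs1
      · subst hs1
        have h0 : (1/4)*(y*1)^4 + 2*η*(y*1)^3 + 4*η^2*(y*1)^2 - (y*1)^2 + v^2 = 0 := by
          linear_combination hGy
        have hR : (1-(1:ℝ)) ^ (-(1/2):ℝ) = 0 := by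
          norm_num
        rw [h0, Real.sqrt_zero, one_div, inv_zero, mul_zero, norm_zero, hR, mul_zero, norm_zero]
      · -- s < 1
        have h1s : 0 < 1 - s := by linarith
        have hEs := hE s hs.1.le hs1
        have hlow : y*c*(1-s) ≤ (1/4)*(y*s)^4 + 2*η*(y*s)^3 + 4*η^2*(y*s)^2 - (y*s)^2 + v^2 := by
          have hid : (1/4)*(y*s)^4 + 2*η*(y*s)^3 + 4*η^2*(y*s)^2 - (y*s)^2 + v^2 = (y - y*s) * Q (y*s) := by
            have := hQid (y*s)
            linarith [hQid (y*s), hGy]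
          rw [hid]
          have hQys : c ≤ Q (y*s) := hz₀min ⟨by positivity, by nlinarith⟩
          nlinarith [mul_nonneg (mul_nonneg hy0.le h1s.le) (sub_nonneg.mpr hQys)]
        have hyc : 0 < y*c*(1-s) := by positivity
        have hsq : Real.sqrt (y*c*(1-s)) ≤ Real.sqrt ((1/4)*(y*s)^4 + 2*η*(y*s)^3 + 4*η^2*(y*s)^2 - (y*s)^2 + v^2) :=
          Real.sqrt_le_sqrt hlow
        have hsqpos : 0 < Real.sqrt (y*c*(1-s)) := Real.sqrt_pos.mpr hyc
        have h1 : y * (1 / Real.sqrt ((1/4)*(y*s)^4 + 2*η*(y*s)^3 + 4*η^2*(y*s)^2 - (y*s)^2 + v^2))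
            ≤ y / Real.sqrt (y*c*(1-s)) := by
          rw [mul_one_div]
          exact div_le_div_of_nonneg_left hy0.le hsqpos hsq |>.trans_eq rfl
        have h2 : y / Real.sqrt (y*c*(1-s)) = K * (1-s) ^ (-(1/2):ℝ) := by
          rw [hK, Real.sqrt_mul (by positivity : (0:ℝ) ≤ y*c)]
          rw [Real.rpow_neg (by linarith : (0:ℝ) ≤ 1-s)]
          rw [← Real.sqrt_eq_rpow (1-s)]  -- check direction
          field_simp
        have hnn : 0 ≤ y * (1 / Real.sqrt ((1/4)*(y*s)^4 + 2*η*(y*s)^3 + 4*η^2*(y*s)^2 - (y*s)^2 + v^2)) := by positivity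
        have hmajnn : 0 ≤ K * (1-s) ^ (-(1/2):ℝ) := by
          apply mul_nonneg (by positivity)
          exact Real.rpow_nonneg (by linarith) _
        rw [Real.norm_of_nonneg hnn, Real.norm_of_nonneg hmajnn]
        calc y * (1 / Real.sqrt _) ≤ y / Real.sqrt (y*c*(1-s)) := h1
          _ = K * (1-s) ^ (-(1/2):ℝ) := h2
  refine ⟨hint, ?_, ?_⟩
  · -- substitution
    have h := intervalIntegral.smul_integral_comp_mul_left
      (f := fun z => 1 / Real.sqrt ((1/4)*z^4 + 2*η*z^3 + 4*η^2*z^2 - z^2 + v^2)) (a := 0) (b := 1) y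
    simp only [mul_zero, mul_one] at h
    rw [← h, smul_eq_mul, ← intervalIntegral.integral_const_mul]
  · intro s hs
    have hEs := hE s hs.1.le hs.2
    have hA : (1/4)*(y*s)^4 + 2*η*(y*s)^3 + 4*η^2*(y*s)^2 - (y*s)^2 + v^2
        = y^2 * ((1/4)*y^2*(s^4-1) + 2*η*y*(s^3-1) + (4*η^2-1)*(s^2-1)) := by
      linear_combination hGy
    have hy2 : (0:ℝ) < y^2 := by positivity
    have hApos : 0 < (1/4)*y^2*(s^4-1) + 2*η*y*(s^3-1) + (4*η^2-1)*(s^2-1) := by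
      rw [hA] at hEs
      by_contra h
      push_neg at h
      nlinarith
    refine ⟨hApos, ?_⟩
    rw [hA, Real.sqrt_mul (by positivity) _, Real.sqrt_sq hy0.le]
    rw [mul_one_div, div_mul_eq_div_div, div_self hy0.ne']


theorem T_strictMono (η : ℝ) (hη0 : 0 ≤ η) (hη : η < 1/2)
    (G : ℝ → ℝ) (hG : ∀ z, G z = (1/4) * z^4 + 2*η*z^3 + 4*η^2*z^2 - z^2)
    (v₀ : ℝ) (hv₀ : v₀ = Real.sqrt (-(G (Real.sqrt (η^2 + 2) - 3*η))))
    (yf : ℝ → ℝ)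
    (hyf : ∀ v ∈ Set.Ioo (0:ℝ) v₀, IsLeast {z : ℝ | 0 < z ∧ G z + v^2 = 0} (yf v)) :
    StrictMonoOn (fun v => ∫ z in (0:ℝ)..(yf v), 1 / Real.sqrt (G z + v^2))
      (Set.Ioo (0:ℝ) v₀) := by
  have hGfun : G = fun z => (1/4) * z^4 + 2*η*z^3 + 4*η^2*z^2 - z^2 := funext hG
  subst hGfun
  simp only [] at hv₀ hyf ⊢
  have hs2 : (Real.sqrt (η^2+2))^2 = η^2+2 := Real.sq_sqrt (by positivity)
  have hs0 : 0 < Real.sqrt (η^2+2) := Real.sqrt_pos.mpr (by positivity)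
  have hzs0 : 0 < Real.sqrt (η^2+2) - 3*η := by nlinarith
  have hanti := Ganti η hη0 hη
  have hhzs : (1/4)*(Real.sqrt (η^2+2) - 3*η)^2 + 2*η*(Real.sqrt (η^2+2) - 3*η) + 4*η^2 - 1 < 0 := by
    nlinarith [mul_nonneg hη0 hs0.le]
  have hGzs : (1/4)*(Real.sqrt (η^2+2) - 3*η)^4 + 2*η*(Real.sqrt (η^2+2) - 3*η)^3
      + 4*η^2*(Real.sqrt (η^2+2) - 3*η)^2 - (Real.sqrt (η^2+2) - 3*η)^2 < 0 := by
    nlinarith [pow_pos hzs0 2]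
  have hv02 : v₀^2 = -((1/4)*(Real.sqrt (η^2+2) - 3*η)^4 + 2*η*(Real.sqrt (η^2+2) - 3*η)^3
      + 4*η^2*(Real.sqrt (η^2+2) - 3*η)^2 - (Real.sqrt (η^2+2) - 3*η)^2) := by
    rw [hv₀]
    exact Real.sq_sqrt (by linarith)
  have hroot : ∀ v ∈ Set.Ioo (0:ℝ) v₀, 0 < yf v ∧ yf v < Real.sqrt (η^2+2) - 3*η ∧
      (1/4)*(yf v)^4 + 2*η*(yf v)^3 + 4*η^2*(yf v)^2 - (yf v)^2 = -v^2 := by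
    intro v hv
    obtain ⟨hymem, hyle⟩ := hyf v hv
    simp only [Set.mem_setOf_eq] at hymem
    have hy0 : 0 < yf v := hymem.1
    have hGyv : (1/4)*(yf v)^4 + 2*η*(yf v)^3 + 4*η^2*(yf v)^2 - (yf v)^2 = -v^2 := by
      linarith [hymem.2]
    have hv2 : v^2 < v₀^2 := by nlinarith [hv.1, hv.2]
    have hcont : ContinuousOn (fun z : ℝ => (1/4)*z^4 + 2*η*z^3 + 4*η^2*z^2 - z^2)
        (Set.Icc 0 (Real.sqrt (η^2+2) - 3*η)) := Continuous.continuousOn (by fun_prop)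
    have hmem : -v^2 ∈ Set.Ioo
        ((fun z : ℝ => (1/4)*z^4 + 2*η*z^3 + 4*η^2*z^2 - z^2) (Real.sqrt (η^2+2) - 3*η))
        ((fun z : ℝ => (1/4)*z^4 + 2*η*z^3 + 4*η^2*z^2 - z^2) 0) := by
      constructor
      · simp only []
        linarith
      · simp only []
        nlinarith [hv.1]
    obtain ⟨w, hw, hweq⟩ := intermediate_value_Ioo' hzs0.le hcont hmem
    simp only [] at hweq
    have hwmem : w ∈ {z : ℝ | 0 < z ∧ (1/4)*z^4 + 2*η*z^3 + 4*η^2*z^2 - z^2 + v^2 = 0} :=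
      ⟨hw.1, by linarith⟩
    exact ⟨hy0, lt_of_le_of_lt (hyle hwmem) hw.2, hGyv⟩
  intro v₁ hv₁ v₂ hv₂ hlt
  obtain ⟨hy10, hy1zs, hGy1⟩ := hroot v₁ hv₁
  obtain ⟨hy20, hy2zs, hGy2⟩ := hroot v₂ hv₂
  have hy12 : yf v₁ < yf v₂ := by
    rcases lt_trichotomy (yf v₁) (yf v₂) with h | h | h
    · exact h
    · exfalso
      rw [h] at hGy1
      nlinarith [hv₁.1, hv₂.1, hlt]
    · exfalso
      have := hanti ⟨hy20.le, hy2zs.le⟩ ⟨hy10.le, hy1zs.le⟩ h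
      simp only [] at this
      nlinarith [hv₁.1, hv₂.1, hlt]
  obtain ⟨hint1, heq1, hform1⟩ := Taux η hη0 hη v₁ (yf v₁) hv₁.1 hy10 hanti hy1zs hGy1
  obtain ⟨hint2, heq2, hform2⟩ := Taux η hη0 hη v₂ (yf v₂) hv₂.1 hy20 hanti hy2zs hGy2
  simp only []
  rw [heq1, heq2]
  have hdiff : 0 < ∫ s in (0:ℝ)..1,
      ((fun s => yf v₂ * (1 / Real.sqrt ((1/4)*(yf v₂*s)^4 + 2*η*(yf v₂*s)^3 + 4*η^2*(yf v₂*s)^2 - (yf v₂*s)^2 + v₂^2))) s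
      - (fun s => yf v₁ * (1 / Real.sqrt ((1/4)*(yf v₁*s)^4 + 2*η*(yf v₁*s)^3 + 4*η^2*(yf v₁*s)^2 - (yf v₁*s)^2 + v₁^2))) s) := by
    apply intervalIntegral_pos_of_pos_on (hint2.sub hint1) _ (by norm_num)
    intro s hs
    obtain ⟨hA1pos, hf1⟩ := hform1 s hs
    obtain ⟨hA2pos, hf2⟩ := hform2 s hs
    simp only [hf1, hf2]
    have hs01 : 0 < s := hs.1
    have hs11 : s < 1 := hs.2
    have hs4 : s^4 < 1 := pow_lt_one₀ hs01.le hs11 (by norm_num)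
    have hs3 : s^3 ≤ 1 := pow_le_one₀ hs01.le hs11.le
    have t1 : 0 < (1 - s^4) * ((yf v₂)^2 - (yf v₁)^2) :=
      mul_pos (by linarith) (by nlinarith)
    have t2 : 0 ≤ η * ((1 - s^3) * (yf v₂ - yf v₁)) :=
      mul_nonneg hη0 (mul_nonneg (by linarith) (by linarith))
    have hAlt : (1/4)*(yf v₂)^2*(s^4-1) + 2*η*(yf v₂)*(s^3-1) + (4*η^2-1)*(s^2-1)
        < (1/4)*(yf v₁)^2*(s^4-1) + 2*η*(yf v₁)*(s^3-1) + (4*η^2-1)*(s^2-1) := by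
      nlinarith [t1, t2]
    have hsq : Real.sqrt ((1/4)*(yf v₂)^2*(s^4-1) + 2*η*(yf v₂)*(s^3-1) + (4*η^2-1)*(s^2-1))
        < Real.sqrt ((1/4)*(yf v₁)^2*(s^4-1) + 2*η*(yf v₁)*(s^3-1) + (4*η^2-1)*(s^2-1)) :=
      Real.sqrt_lt_sqrt hA2pos.le hAlt
    have h2 : 0 < Real.sqrt ((1/4)*(yf v₂)^2*(s^4-1) + 2*η*(yf v₂)*(s^3-1) + (4*η^2-1)*(s^2-1)) :=
      Real.sqrt_pos.mpr hA2pos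
    have := one_div_lt_one_div_of_lt h2 hsq
    linarith
  rw [intervalIntegral.integral_sub hint2 hint1] at hdiff
  linarith
end

section
/- Let 0 ≤ η < 1/2, G(z) = (1/4)z⁴ + 2ηz³ + 4η²z² − z², v₀ = √(−G(√(η²+2)−3η)), and T(v) = ∫₀^{y(v)} dz/√(G(z)+v²) for v ∈ (0, v₀). Then T(v) → +∞ as v → v₀⁻. -/
open Set Filter MeasureTheory intervalIntegral Topology

set_option maxHeartbeats 1000000 in
theorem T_tendsto_atTop (η : ℝ) (hη0 : 0 ≤ η) (hη : η < 1/2)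
    (G : ℝ → ℝ) (hG : ∀ z, G z = (1/4) * z^4 + 2*η*z^3 + 4*η^2*z^2 - z^2)
    (v₀ : ℝ) (hv₀ : v₀ = Real.sqrt (-(G (Real.sqrt (η^2 + 2) - 3*η))))
    (yf : ℝ → ℝ)
    (hyf : ∀ v ∈ Set.Ioo (0:ℝ) v₀, IsLeast {z : ℝ | 0 < z ∧ G z + v^2 = 0} (yf v)) :
    Filter.Tendsto (fun v => ∫ z in (0:ℝ)..(yf v), 1 / Real.sqrt (G z + v^2))
      (nhdsWithin v₀ (Set.Iio v₀)) Filter.atTop := by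
  set p := Real.sqrt (η^2 + 2) with hp_def
  set a := p - 3*η with ha_def
  have hp2 : p^2 = η^2 + 2 := Real.sq_sqrt (by positivity)
  have hp_pos : 0 < p := Real.sqrt_pos.mpr (by positivity)
  have hp_le : p ≤ 3/2 := by nlinarith [hp2, hp_pos]
  have ha_pos : 0 < a := by rw [ha_def]; nlinarith [hp2, hp_pos]
  have ha_le : a ≤ 3/2 := by rw [ha_def]; nlinarith
  have hquad : a^2 + 6*η*a + 8*η^2 - 2 = 0 := by
    rw [ha_def]; linear_combination hp2
  have hGa_neg : G a < 0 := by
    rw [hG]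
    nlinarith [hquad, mul_pos ha_pos ha_pos, hp2, hp_le, ha_le, ha_pos, sq_nonneg η,
      mul_nonneg hη0 ha_pos.le]
  have hv0sq : v₀^2 = -(G a) := by rw [hv₀]; exact Real.sq_sqrt (by linarith)
  have hv0_pos : 0 < v₀ := by rw [hv₀]; exact Real.sqrt_pos.mpr (by linarith)
  clear_value p a
  have key : ∀ z, G z + v₀^2 = (1/4)*(z-a)^2*(z^2+(8*η+2*a)*z+a*(4*η+a)) := by
    intro z
    rw [hv0sq, hG, hG]
    linear_combination (z^2/2 - a^2/2) * hquad
  have hG' : ∀ z, HasDerivAt G (z*(z-a)*(z+3*η+p)) z := by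
    intro z
    have hfun : G = fun z => (1/4) * z^4 + 2*η*z^3 + 4*η^2*z^2 - z^2 := funext hG
    rw [hfun]
    have h := (((hasDerivAt_pow 4 z).const_mul ((1:ℝ)/4)).add
      ((hasDerivAt_pow 3 z).const_mul (2*η))).add
      ((hasDerivAt_pow 2 z).const_mul (4*η^2)) |>.sub (hasDerivAt_pow 2 z)
    refine h.congr_deriv (Eq.symm ?_)
    push_cast
    rw [ha_def]
    linear_combination (-z) * hp2
  have hGcont : Continuous G := by
    rw [funext hG]; fun_prop
  have hanti : StrictAntiOn G (Icc 0 a) := by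
    apply strictAntiOn_of_deriv_neg (convex_Icc 0 a) hGcont.continuousOn
    intro z hz
    rw [interior_Icc] at hz
    rw [(hG' z).deriv]
    have h1 : z - a < 0 := by linarith [hz.2]
    have h2 : 0 < z + 3*η + p := by linarith [hz.1]
    exact mul_neg_of_neg_of_pos (mul_neg_of_pos_of_neg hz.1 h1) h2
  have hG0 : G 0 = 0 := by rw [hG]; ring
  -- basic facts about yf v
  have hyfact : ∀ v ∈ Ioo (0:ℝ) v₀, 0 < yf v ∧ yf v < a ∧ G (yf v) + v^2 = 0 := by
    intro v hv
    obtain ⟨⟨hy_pos, hy_root⟩, hy_least⟩ := hyf v hv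
    have hv2 : v^2 < v₀^2 := by nlinarith [hv.1, hv.2]
    have hFa : G a + v^2 < 0 := by linarith [hv0sq]
    have hF0 : G 0 + v^2 > 0 := by rw [hG0]; nlinarith [hv.1]
    have hIVT : (0:ℝ) ∈ Ioo (G a + v^2) (G 0 + v^2) := ⟨hFa, hF0⟩
    have hcont : ContinuousOn (fun z => G z + v^2) (Icc 0 a) :=
      (hGcont.add continuous_const).continuousOn
    have := intermediate_value_Ioo' ha_pos.le hcont hIVT
    obtain ⟨c, hc, hFc⟩ := this
    have hle : yf v ≤ c := hy_least ⟨hc.1, hFc⟩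
    exact ⟨hy_pos, lt_of_le_of_lt hle hc.2, hy_root⟩
  -- positivity of G z + v^2 on [0, yf v)
  have hpos : ∀ v ∈ Ioo (0:ℝ) v₀, ∀ z ∈ Ico 0 (yf v), 0 < G z + v^2 := by
    intro v hv z hz
    obtain ⟨⟨hy_pos, hy_root⟩, hy_least⟩ := hyf v hv
    rcases lt_trichotomy (G z + v^2) 0 with hneg | hzero | hpos
    · exfalso
      have hF0 : G 0 + v^2 > 0 := by rw [hG0]; nlinarith [hv.1]
      have hz0 : (0:ℝ) < z := by
        rcases eq_or_lt_of_le hz.1 with h | h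
        · exfalso; rw [← h] at hneg; linarith
        · exact h
      have hcont : ContinuousOn (fun w => G w + v^2) (Icc 0 z) :=
        (hGcont.add continuous_const).continuousOn
      have hIVT : (0:ℝ) ∈ Ioo (G z + v^2) (G 0 + v^2) := ⟨hneg, hF0⟩
      obtain ⟨c, hc, hFc⟩ := intermediate_value_Ioo' hz0.le hcont hIVT
      have := hy_least ⟨hc.1, hFc⟩
      linarith [hc.2, hz.2]
    · exfalso
      have hz0 : (0:ℝ) < z := by
        rcases eq_or_lt_of_le hz.1 with h | h
        · exfalso; rw [← h] at hzero; rw [hG0] at hzero; nlinarith [hv.1]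
        · exact h
      have := hy_least ⟨hz0, hzero⟩
      linarith [hz.2]
    · exact hpos
  -- upper bound on G z + v₀²
  have hub : ∀ z ∈ Icc (0:ℝ) a, G z + v₀^2 ≤ 9*(a-z)^2 := by
    intro z hz
    rw [key z]
    have hQ : z^2 + (8*η+2*a)*z + a*(4*η+a) ≤ 36 := by nlinarith [hz.1, hz.2]
    have h36 := mul_le_mul_of_nonneg_left hQ (sq_nonneg (z-a))
    calc (1/4)*(z-a)^2*(z^2 + (8*η+2*a)*z + a*(4*η+a))
        = (1/4)*((z-a)^2*(z^2 + (8*η+2*a)*z + a*(4*η+a))) := by ring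
      _ ≤ (1/4)*((z-a)^2*36) := by linarith [h36]
      _ = 9*(a-z)^2 := by ring
  -- pointwise comparison with 1/(3(a-z))
  have hfg : ∀ v ∈ Ioo (0:ℝ) v₀, ∀ z ∈ Ico 0 (yf v),
      1/(3*(a-z)) ≤ 1 / Real.sqrt (G z + v^2) := by
    intro v hv z hz
    obtain ⟨hy_pos, hy_lt, hy_root⟩ := hyfact v hv
    have hza : z < a := lt_trans hz.2 hy_lt
    have h2 : 0 < G z + v^2 := hpos v hv z hz
    have hv2 : v^2 ≤ v₀^2 := pow_le_pow_left₀ hv.1.le hv.2.le 2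
    have h1 : G z + v^2 ≤ 9*(a-z)^2 := by
      have := hub z ⟨hz.1, hza.le⟩; linarith
    have hsq : Real.sqrt (G z + v^2) ≤ 3*(a-z) := by
      have h3 : (9:ℝ)*(a-z)^2 = (3*(a-z))^2 := by ring
      calc Real.sqrt (G z + v^2) ≤ Real.sqrt (9*(a-z)^2) := Real.sqrt_le_sqrt h1
        _ = 3*(a-z) := by rw [h3]; exact Real.sqrt_sq (by linarith)
    exact one_div_le_one_div_of_le (Real.sqrt_pos.mpr h2) hsq
  -- measurability of integrand
  have hmeas : ∀ v : ℝ, Measurable (fun z => 1 / Real.sqrt (G z + v^2)) := by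
    intro v
    simp only [one_div]
    exact (Real.continuous_sqrt.comp (hGcont.add continuous_const)).measurable.inv
  -- integrability
  have hInt : ∀ v ∈ Ioo (0:ℝ) v₀,
      IntervalIntegrable (fun z => 1 / Real.sqrt (G z + v^2)) volume 0 (yf v) := by
    intro v hv
    obtain ⟨hy_pos, hy_lt, hy_root⟩ := hyfact v hv
    set y := yf v with hy_def
    have piece1 : IntervalIntegrable (fun z => 1 / Real.sqrt (G z + v^2)) volume 0 (y/2) := by
      apply ContinuousOn.intervalIntegrable
      rw [uIcc_of_le (by linarith : (0:ℝ) ≤ y/2)]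
      apply ContinuousOn.div continuousOn_const
        (Real.continuous_sqrt.comp_continuousOn ((hGcont.continuousOn).add continuousOn_const))
      intro z hz
      exact ne_of_gt (Real.sqrt_pos.mpr (hpos v hv z ⟨hz.1, by
        have := hz.2; simp only [mem_Icc] at *; linarith⟩))
    have hc : 0 < (y/2)*(a-y)*p := by
      apply mul_pos (mul_pos (by linarith) (by linarith)) hp_pos
    have hlow : ∀ z ∈ Icc (y/2) y, (y/2)*(a-y)*p*(y-z) ≤ G z + v^2 := by
      have hFd : ∀ z, HasDerivAt (fun w => G w + v^2 - (y/2)*(a-y)*p*(y-w))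
          (z*(z-a)*(z+3*η+p) + (y/2)*(a-y)*p) z := by
        intro z
        have h1 := (hG' z).add_const (v^2)
        have h2 : HasDerivAt (fun w => (y/2)*(a-y)*p*(y-w)) (-((y/2)*(a-y)*p)) z := by
          simpa using ((hasDerivAt_id z).const_sub y).const_mul ((y/2)*(a-y)*p)
        have h3 := h1.sub h2
        refine h3.congr_deriv (Eq.symm ?_)
        ring
      have hant : AntitoneOn (fun w => G w + v^2 - (y/2)*(a-y)*p*(y-w)) (Icc (y/2) y) := by
        apply antitoneOn_of_deriv_nonpos (convex_Icc _ _)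
        · exact fun z _ => ((hFd z).continuousAt).continuousWithinAt
        · exact fun z _ => ((hFd z).differentiableAt).differentiableWithinAt
        · intro z hz
          rw [interior_Icc] at hz
          rw [(hFd z).deriv]
          have e1 : (y/2)*(a-y) ≤ z*(a-z) :=
            mul_le_mul hz.1.le (by linarith [hz.2]) (by linarith) (by linarith [hz.1])
          have e2 : (y/2)*(a-y)*p ≤ z*(a-z)*(z+3*η+p) :=
            mul_le_mul e1 (by linarith [hz.1]) hp_pos.le
              (mul_nonneg (by linarith [hz.1]) (by linarith [hz.2]))
          have e3 : z*(z-a)*(z+3*η+p) = -(z*(a-z)*(z+3*η+p)) := by ring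
          linarith
      intro z hz
      have h4 := hant hz (right_mem_Icc.mpr (by linarith)) hz.2
      simp only at h4
      rw [hy_root] at h4
      have : G y + v^2 - (y/2)*(a-y)*p*(y-y) = 0 := by rw [hy_root]; ring
      linarith [hant hz (right_mem_Icc.mpr (by linarith : y/2 ≤ y)) hz.2]
    have i1 : IntervalIntegrable (fun x:ℝ => x ^ (-(1/2):ℝ)) volume 0 (y/2) :=
      intervalIntegrable_rpow' (by norm_num)
    have i2 := i1.comp_sub_left y
    rw [show y - (0:ℝ) = y by ring, show y - y/2 = y/2 by ring] at i2
    have i3 := (i2.symm).const_mul (((y/2)*(a-y)*p) ^ (-(1/2):ℝ))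
    have piece2 : IntervalIntegrable (fun z => 1 / Real.sqrt (G z + v^2)) volume (y/2) y := by
      apply i3.mono_fun' ((hmeas v).aestronglyMeasurable)
      rw [Filter.EventuallyLE]
      rw [uIoc_of_le (by linarith : y/2 ≤ y)]
      filter_upwards [ae_restrict_mem measurableSet_Ioc] with z hz
      have hnonneg : 0 ≤ 1 / Real.sqrt (G z + v^2) := by positivity
      rw [Real.norm_eq_abs, abs_of_nonneg hnonneg]
      have e1 : ∀ x:ℝ, 0 ≤ x → x ^ (-(1/2):ℝ) = (Real.sqrt x)⁻¹ := by
        intro x hx; rw [Real.rpow_neg hx, Real.sqrt_eq_rpow]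
      rcases eq_or_lt_of_le hz.2 with he | hlt
      · rw [he]
        rw [hy_root, Real.sqrt_zero, div_zero, sub_self,
          Real.zero_rpow (by norm_num : (-(1/2):ℝ) ≠ 0), mul_zero]
      · have hGz := hlow z ⟨hz.1.le, hz.2⟩
        have hcz : 0 < (y/2)*(a-y)*p*(y-z) := mul_pos hc (by linarith)
        have h4 : 1/Real.sqrt (G z+v^2) ≤ 1/Real.sqrt ((y/2)*(a-y)*p*(y-z)) :=
          one_div_le_one_div_of_le (Real.sqrt_pos.mpr hcz) (Real.sqrt_le_sqrt hGz)
        have h5 : 1/Real.sqrt ((y/2)*(a-y)*p*(y-z))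
            = ((y/2)*(a-y)*p) ^ (-(1/2):ℝ) * (y-z) ^ (-(1/2):ℝ) := by
          rw [e1 _ hc.le, e1 _ (by linarith : (0:ℝ) ≤ y - z), Real.sqrt_mul hc.le,
            one_div, mul_inv]
        rw [← h5]
        exact h4
    exact piece1.trans piece2
  -- lower bound on the integral
  have hTlb : ∀ v ∈ Ioo (0:ℝ) v₀, (1/3)*(Real.log a - Real.log (a - yf v))
      ≤ ∫ z in (0:ℝ)..(yf v), 1 / Real.sqrt (G z + v^2) := by
    intro v hv
    obtain ⟨hy_pos, hy_lt, hy_root⟩ := hyfact v hv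
    set y := yf v with hy_def
    have hgcont : ContinuousOn (fun z => 1/(3*(a-z))) (Icc 0 y) := by
      apply ContinuousOn.div continuousOn_const (Continuous.continuousOn (by fun_prop))
      intro z hz
      have : (0:ℝ) < 3*(a-z) := by
        have := hz.2; simp only [mem_Icc] at *; nlinarith [hz.1]
      exact ne_of_gt this
    have hintg : IntervalIntegrable (fun z => 1/(3*(a-z))) volume 0 y := by
      apply ContinuousOn.intervalIntegrable
      rwa [uIcc_of_le hy_pos.le]
    have hde : ∀ z ∈ uIcc (0:ℝ) y, HasDerivAt (fun w => -(1/3)*Real.log (a-w))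
        (1/(3*(a-z))) z := by
      intro z hz
      rw [uIcc_of_le hy_pos.le] at hz
      have haz : 0 < a - z := by linarith [hz.2]
      have h1 := (((hasDerivAt_id z).const_sub a).log (ne_of_gt haz)).const_mul (-(1/3):ℝ)
      refine h1.congr_deriv (Eq.symm ?_)
      simp only [id]
      field_simp
    have hval : ∫ z in (0:ℝ)..y, 1/(3*(a-z)) = (1/3)*(Real.log a - Real.log (a-y)) := by
      rw [intervalIntegral.integral_eq_sub_of_hasDerivAt hde hintg]
      rw [sub_zero]
      ring
    have hmono : ∫ z in (0:ℝ)..y, 1/(3*(a-z))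
        ≤ ∫ z in (0:ℝ)..y, 1 / Real.sqrt (G z + v^2) := by
      apply intervalIntegral.integral_mono_ae_restrict hy_pos.le hintg (hInt v hv)
      have hz_ne : ∀ᵐ z ∂(volume.restrict (Icc (0:ℝ) y)), z ≠ y := by
        apply ae_restrict_of_ae
        rw [MeasureTheory.ae_iff]
        have he : {z:ℝ | ¬ z ≠ y} = {y} := by ext w; simp
        rw [he]
        exact measure_singleton y
      filter_upwards [ae_restrict_mem measurableSet_Icc, hz_ne] with z hzm hzne
      exact hfg v hv z ⟨hzm.1, lt_of_le_of_ne hzm.2 hzne⟩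
    rw [← hval]
    exact hmono
  -- eventually in Ioo 0 v₀
  have hevIoo : ∀ᶠ v in nhdsWithin v₀ (Iio v₀), v ∈ Ioo (0:ℝ) v₀ := by
    have h1 : ∀ᶠ v in nhdsWithin v₀ (Iio v₀), v ∈ Iio v₀ := eventually_mem_nhdsWithin
    have h2 : ∀ᶠ v in nhdsWithin v₀ (Iio v₀), 0 < v :=
      eventually_nhdsWithin_of_eventually_nhds (lt_mem_nhds hv0_pos)
    filter_upwards [h1, h2] with v hv1 hv2
    exact ⟨hv2, hv1⟩
  -- yf v → a from below
  have hylim : Tendsto (fun v => a - yf v) (nhdsWithin v₀ (Iio v₀)) (nhdsWithin 0 (Ioi 0)) := by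
    rw [tendsto_nhdsWithin_iff]
    constructor
    · rw [tendsto_order]
      constructor
      · intro b hb
        filter_upwards [hevIoo] with v hv
        have := (hyfact v hv).2.1
        linarith
      · intro b hb
        have hε : 0 < min (b/2) (a/2) := lt_min (by linarith) (by linarith)
        set ε := min (b/2) (a/2) with hε_def
        have hεa : ε < a := lt_of_le_of_lt (min_le_right _ _) (by linarith)
        have hεb : ε < b := lt_of_le_of_lt (min_le_left _ _) (by linarith)
        have haε : a - ε ∈ Icc (0:ℝ) a := ⟨by linarith, by linarith⟩
        have hm : 0 < G (a-ε) + v₀^2 := by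
          have := hanti haε (right_mem_Icc.mpr ha_pos.le) (by linarith : a - ε < a)
          linarith [hv0sq]
        have hcont2 : ∀ᶠ v in 𝓝 v₀, v₀^2 - (G (a-ε) + v₀^2) < v^2 :=
          ((continuous_pow 2).tendsto v₀).eventually (eventually_gt_nhds (by linarith))
        filter_upwards [hevIoo, eventually_nhdsWithin_of_eventually_nhds hcont2] with v hv hv2
        obtain ⟨hy_pos, hy_lt, hy_root⟩ := hyfact v hv
        by_contra hcon
        push_neg at hcon
        have hyle : yf v ≤ a - ε := by linarith
        have hGge : G (a-ε) ≤ G (yf v) := by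
          rcases eq_or_lt_of_le hyle with h | h
          · rw [h]
          · exact (hanti (mem_Icc.mpr ⟨hy_pos.le, by linarith⟩) haε h).le
        linarith
    · filter_upwards [hevIoo] with v hv
      exact mem_Ioi.mpr (by linarith [(hyfact v hv).2.1])
  have hloglim : Tendsto (fun v => Real.log (a - yf v)) (nhdsWithin v₀ (Iio v₀)) atBot :=
    Real.tendsto_log_nhdsGT_zero.comp hylim
  have hLlim : Tendsto (fun v => (1/3)*(Real.log a - Real.log (a - yf v)))
      (nhdsWithin v₀ (Iio v₀)) atTop := by
    apply Filter.tendsto_const_mul_atTop_of_pos (by norm_num : (0:ℝ) < 1/3) |>.mpr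
    apply Filter.tendsto_atTop_add_const_left
    exact Filter.tendsto_neg_atBot_atTop.comp hloglim
  apply tendsto_atTop_mono' _ _ hLlim
  filter_upwards [hevIoo] with v hv
  exact hTlb v hv
end

section
/- Let 0 ≤ η < 1/2, G(z) = (1/4)z⁴ + 2ηz³ + 4η²z² − z², v₀ = √(−G(√(η²+2)−3η)). Then (z − (√(η²+2)−3η))² divides the polynomial G(z) + v₀². -/
/-!
`G` has derivative `z (z² + 6ηz + 8η² - 2)`, whose positive root is `r = √(η² + 2) - 3η`.
Hence `r` is a critical point of `G`, so `(z - r)²` divides `G - G(r)`. For `η ≤ 1/2` one has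
`G(r) ≤ 0`, so `v₀² = -G(r)` and `G + v₀² = G - G(r)`.
-/

open Polynomial

theorem sq_X_sub_C_dvd_of_isRoot_of_isRoot_derivative {R : Type*} [CommRing R] {p : R[X]}
    {t : R} (hp : p.IsRoot t) (hp' : p.derivative.IsRoot t) : (X - C t) ^ 2 ∣ p := by
  rcases eq_or_ne p 0 with rfl | hp0
  · exact dvd_zero _
  have : 1 < p.rootMultiplicity t := (one_lt_rootMultiplicity_iff_isRoot hp0).2 ⟨hp, hp'⟩
  exact (pow_dvd_pow _ this).trans (pow_rootMultiplicity_dvd p t)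

theorem sq_X_sub_C_dvd_sub_C_eval {R : Type*} [CommRing R] {p : R[X]} {t : R}
    (hp' : p.derivative.IsRoot t) : (X - C t) ^ 2 ∣ p - C (p.eval t) :=
  sq_X_sub_C_dvd_of_isRoot_of_isRoot_derivative (by simp) (by simpa using hp')

noncomputable def quartic (η : ℝ) : ℝ[X] :=
  C (1/4) * X^4 + C (2*η) * X^3 + C (4*η^2 - 1) * X^2

theorem eval_quartic (η z : ℝ) :
    (quartic η).eval z = (1/4) * z^4 + 2*η*z^3 + 4*η^2*z^2 - z^2 := by
  simp only [quartic, eval_add, eval_mul, eval_C, eval_pow, eval_X]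
  ring

theorem eval_derivative_quartic (η z : ℝ) :
    (quartic η).derivative.eval z = z * (z^2 + 6*η*z + 8*η^2 - 2) := by
  simp only [quartic, derivative_add, derivative_C_mul_X_pow, eval_add, eval_mul, eval_C,
    eval_pow, eval_X]
  norm_num
  ring

theorem criticalPoint_sq_add (η : ℝ) :
    (√(η^2 + 2) - 3*η)^2 + 6*η*(√(η^2 + 2) - 3*η) + 8*η^2 - 2 = 0 := by
  have hs : √(η^2 + 2)^2 = η^2 + 2 := Real.sq_sqrt (by positivity)
  linear_combination hs

theorem isRoot_derivative_quartic (η : ℝ) :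
    (quartic η).derivative.IsRoot (√(η^2 + 2) - 3*η) := by
  rw [IsRoot, eval_derivative_quartic, criticalPoint_sq_add, mul_zero]

theorem eval_quartic_criticalPoint_nonpos {η : ℝ} (hη : η ≤ 1/2) :
    (quartic η).eval (√(η^2 + 2) - 3*η) ≤ 0 := by
  set s := √(η^2 + 2)
  have hs0 : 0 ≤ s := Real.sqrt_nonneg _
  have hs : s^2 = η^2 + 2 := Real.sq_sqrt (by positivity)
  have hG : (quartic η).eval (s - 3*η) = (s - 3*η)^2 * (η*s + η^2 - 1) / 2 := by
    rw [eval_quartic]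
    linear_combination (1/4) * (s - 3*η)^2 * criticalPoint_sq_add η
  have hηs : η * (s + η) ≤ 1 := by
    rcases le_or_gt 0 η with h0 | h0
    · have : s ≤ 3/2 := by nlinarith
      nlinarith
    · have : 0 < s + η := by nlinarith
      nlinarith
  have := mul_nonpos_of_nonneg_of_nonpos (sq_nonneg (s - 3*η)) (by linarith : η*s + η^2 - 1 ≤ 0)
  rw [hG]
  linarith

open Polynomial in
theorem double_root_divides_general (η : ℝ) (hη : η < 1/2)
    (v₀ : ℝ)
    (hv₀ : v₀ = Real.sqrt (-((1/4) * (Real.sqrt (η^2 + 2) - 3*η)^4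
      + 2*η*(Real.sqrt (η^2 + 2) - 3*η)^3 + 4*η^2*(Real.sqrt (η^2 + 2) - 3*η)^2
      - (Real.sqrt (η^2 + 2) - 3*η)^2))) :
    (X - C (Real.sqrt (η^2 + 2) - 3*η))^2 ∣
      (C (1/4 : ℝ) * X^4 + C (2*η) * X^3 + C (4*η^2 - 1) * X^2 + C (v₀^2)) := by
  rw [← eval_quartic] at hv₀
  have hv : C (v₀^2) = -C ((quartic η).eval (√(η^2 + 2) - 3*η)) := by
    rw [hv₀, Real.sq_sqrt (neg_nonneg.2 (eval_quartic_criticalPoint_nonpos hη.le)), C_neg]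
  change _ ∣ quartic η + C (v₀^2)
  rw [hv, ← sub_eq_add_neg]
  exact sq_X_sub_C_dvd_sub_C_eval (isRoot_derivative_quartic η)

open Polynomial in
theorem double_root_divides (η : ℝ) (hη0 : 0 ≤ η) (hη : η < 1/2)
    (v₀ : ℝ)
    (hv₀ : v₀ = Real.sqrt (-((1/4) * (Real.sqrt (η^2 + 2) - 3*η)^4
      + 2*η*(Real.sqrt (η^2 + 2) - 3*η)^3 + 4*η^2*(Real.sqrt (η^2 + 2) - 3*η)^2
      - (Real.sqrt (η^2 + 2) - 3*η)^2))) :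
    (X - C (Real.sqrt (η^2 + 2) - 3*η))^2 ∣
      (C (1/4 : ℝ) * X^4 + C (2*η) * X^3 + C (4*η^2 - 1) * X^2 + C (v₀^2)) :=
  double_root_divides_general η hη v₀ hv₀
end

section
/- Let 0 ≤ η < 1/2, G(z) = (1/4)z⁴ + 2ηz³ + 4η²z² − z², v ∈ (0, v₀) with v₀ = √(−G(√(η²+2)−3η)), and y(v) the smallest positive root of G(z)+v² = 0. Then v² + 4η·y(v) − 1 = −((1/2)y(v)² + 2η·y(v) − 1)² < 0. -/
/-!
Since `G z = ((1/2) z² + 2η z)² - z²`, the root equation `G y + v² = 0` is exactly the claimed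
identity, so only `(1/2) y² + 2η y < 1` remains. The point `z₀ = √(η² + 2) - 3η` is the positive
critical point of `G`, where `(1/2) z₀² + 2η z₀ = 1 - η z₀ - 4η² ≤ 1`. Because `v² < -G z₀`,
the intermediate value theorem puts a root in `(0, z₀)`, so the least positive root `y` lies
below `z₀`, and `(1/2) y² + 2η y` is increasing in `y > 0`.
-/

open Set

theorem IsLeast.lt_of_continuousOn_of_pos_of_neg {f : ℝ → ℝ} {b y : ℝ} (hb : 0 ≤ b)
    (hf : ContinuousOn f (Icc 0 b)) (hf0 : 0 < f 0) (hfb : f b < 0)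
    (hy : IsLeast {z | 0 < z ∧ f z = 0} y) : y < b := by
  obtain ⟨c, ⟨hc0, hcb⟩, hfc⟩ := intermediate_value_Ioo' hb hf ⟨hfb, hf0⟩
  exact (hy.2 ⟨hc0, hfc⟩).trans_lt hcb

theorem add_four_mul_sub_one_eq_neg_sq {η y w : ℝ}
    (h : (1/4) * y^4 + 2*η*y^3 + 4*η^2*y^2 - y^2 + w = 0) :
    w + 4*η*y - 1 = -((1/2)*y^2 + 2*η*y - 1)^2 := by
  linear_combination h

theorem sub_three_mul_pos_of_lt_half {η : ℝ} (hη : η < 1/2) : 0 < √(η^2 + 2) - 3*η := by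
  rcases le_or_gt η 0 with hη0 | hη0
  · have := Real.sqrt_pos.2 (by positivity : (0:ℝ) < η^2 + 2)
    linarith
  · rw [sub_pos, Real.lt_sqrt (by positivity)]
    nlinarith

theorem half_sq_add_lt_one {η y : ℝ} (hη : 0 ≤ η) (hy : 0 < y) (hyz : y < √(η^2 + 2) - 3*η) :
    (1/2)*y^2 + 2*η*y < 1 := by
  set z₀ := √(η^2 + 2) - 3*η
  have hcrit : z₀^2 + 6*η*z₀ + 8*η^2 - 2 = 0 := by
    have := Real.sq_sqrt (by positivity : (0:ℝ) ≤ η^2 + 2)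
    linear_combination this
  calc (1/2)*y^2 + 2*η*y < (1/2)*z₀^2 + 2*η*z₀ := by nlinarith
    _ = 1 - η*z₀ - 4*η^2 := by linear_combination (1/2) * hcrit
    _ ≤ 1 := by nlinarith

theorem v_sq_identity (η : ℝ) (hη0 : 0 ≤ η) (hη : η < 1/2)
    (G : ℝ → ℝ) (hG : ∀ z, G z = (1/4) * z^4 + 2*η*z^3 + 4*η^2*z^2 - z^2)
    (v₀ : ℝ) (hv₀ : v₀ = Real.sqrt (-(G (Real.sqrt (η^2 + 2) - 3*η))))
    (v : ℝ) (hv : v ∈ Set.Ioo 0 v₀)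
    (yv : ℝ) (hyv : IsLeast {z : ℝ | 0 < z ∧ G z + v^2 = 0} yv) :
    v^2 + 4*η*yv - 1 = -((1/2)*yv^2 + 2*η*yv - 1)^2 ∧ v^2 + 4*η*yv - 1 < 0 := by
  obtain ⟨hv0, hvv₀⟩ := hv
  have hz₀ := sub_three_mul_pos_of_lt_half hη
  have hGz₀ : v^2 < -G (√(η^2 + 2) - 3*η) := (Real.lt_sqrt hv0.le).1 (hv₀ ▸ hvv₀)
  have hcont : ContinuousOn (fun z => G z + v^2) (Icc 0 (√(η^2 + 2) - 3*η)) := by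
    simp only [hG]
    fun_prop
  have hy_lt := hyv.lt_of_continuousOn_of_pos_of_neg hz₀.le hcont
    (by simpa [hG] using pow_pos hv0 2) (by linarith)
  have hs := half_sq_add_lt_one hη0 hyv.1.1 hy_lt
  have hid := add_four_mul_sub_one_eq_neg_sq (hG yv ▸ hyv.1.2)
  exact ⟨hid, hid ▸ neg_neg_of_pos (sq_pos_of_neg (by linarith))⟩
end

section
/- Let η ≥ 0 and for v > 0 define I(v) = ∫₀^∞ dz/√(G(z)+v²) where G(z) = (1/4)z⁴ + 2ηz³ + 4η²z² − z², assuming G(z)+v² > 0 for all z ≥ 0. Then v ↦ I(v) is strictly decreasing on its domain, I(v) → +∞ as v → v₊ (the infimum of admissible v), and I(v) → 0 as v → +∞. -/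
open MeasureTheory Set Filter Real

section IHelpers

variable {η : ℝ} {G : ℝ → ℝ}

private lemma I_contG (hG : ∀ z, G z = (1/4)*z^4 + 2*η*z^3 + 4*η^2*z^2 - z^2) :
    Continuous G := by
  have : G = fun z => (1/4)*z^4 + 2*η*z^3 + 4*η^2*z^2 - z^2 := funext hG
  rw [this]; continuity

private lemma I_G_lb1 (hη : 0 ≤ η)
    (hG : ∀ z, G z = (1/4)*z^4 + 2*η*z^3 + 4*η^2*z^2 - z^2)
    {z : ℝ} (hz : 0 ≤ z) : -1 ≤ G z := by
  rw [hG]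
  nlinarith [mul_nonneg hη (pow_nonneg hz 3),
    mul_nonneg (mul_nonneg hη hη) (pow_nonneg hz 2), sq_nonneg (z^2 - 2)]

private lemma I_integrable_f (hη : 0 ≤ η)
    (hG : ∀ z, G z = (1/4)*z^4 + 2*η*z^3 + 4*η^2*z^2 - z^2)
    {v : ℝ} (hpos : ∀ z ≥ (0:ℝ), G z + v^2 > 0) :
    IntegrableOn (fun z => 1 / Real.sqrt (G z + v^2)) (Ioi 0) := by
  have hGc : Continuous G := I_contG hG
  have hlb2 : ∀ z : ℝ, 3 ≤ z → z^4/8 ≤ G z := fun z hz => by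
    have h0 : (0:ℝ) ≤ z := by linarith
    have h1 : z^4/4 - z^2 ≤ G z := by
      rw [hG z]
      nlinarith [mul_nonneg hη (pow_nonneg h0 3), mul_nonneg (mul_nonneg hη hη) (pow_nonneg h0 2)]
    have h9 : 9 ≤ z^2 := by nlinarith
    have : 0 ≤ z^2 * (z^2 - 8) := mul_nonneg (sq_nonneg z) (by linarith)
    nlinarith
  have hcont : ContinuousOn (fun z => 1 / Real.sqrt (G z + v^2)) (Ici 0) := by
    apply ContinuousOn.div continuousOn_const
    · exact (Real.continuous_sqrt.comp (hGc.add continuous_const)).continuousOn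
    · intro z hz
      exact ne_of_gt (Real.sqrt_pos.2 (hpos z hz))
  rw [← Ioc_union_Ioi_eq_Ioi (by norm_num : (0:ℝ) ≤ 3), integrableOn_union]
  constructor
  · exact ((hcont.mono (Icc_subset_Ici_self)).integrableOn_Icc).mono_set Ioc_subset_Icc_self
  · apply Integrable.mono' (((integrableOn_Ioi_rpow_of_lt (by norm_num : (-2:ℝ) < -1)
      (by norm_num : (0:ℝ) < 3)).const_mul (Real.sqrt 8)))
    · have : AEStronglyMeasurable (fun z => (Real.sqrt (G z + v^2))⁻¹)
          (volume.restrict (Ioi (3:ℝ))) :=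
        ((Real.continuous_sqrt.comp (hGc.add continuous_const)).measurable.inv).aestronglyMeasurable
      simpa [one_div] using this
    · rw [ae_restrict_iff' measurableSet_Ioi]
      refine Filter.Eventually.of_forall fun z hz => ?_
      have hz3 : (3:ℝ) ≤ z := le_of_lt hz
      have hz0 : (0:ℝ) < z := by linarith
      have hq : z^4/8 ≤ G z + v^2 := le_add_of_le_of_nonneg (hlb2 z hz3) (sq_nonneg v)
      have hden : 0 < Real.sqrt (G z + v^2) := Real.sqrt_pos.2 (by nlinarith [pow_pos hz0 4])
      rw [Real.norm_of_nonneg (by positivity)]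
      have hrw : z ^ (-2:ℝ) = (z^2)⁻¹ := by
        rw [show (-2:ℝ) = -((2:ℕ):ℝ) by norm_num, Real.rpow_neg hz0.le, Real.rpow_natCast]
      rw [hrw]
      have h1 : (z^2:ℝ) ≤ Real.sqrt 8 * Real.sqrt (G z + v^2) := by
        rw [← Real.sqrt_mul (by norm_num : (0:ℝ) ≤ 8)]
        have : (z^2:ℝ) = Real.sqrt ((z^2)^2) := (Real.sqrt_sq (sq_nonneg z)).symm
        rw [this]
        apply Real.sqrt_le_sqrt
        nlinarith
      rw [div_le_iff₀ hden]
      calc (1:ℝ) = (z^2) * (z^2)⁻¹ := (mul_inv_cancel₀ (by positivity)).symm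
        _ ≤ (Real.sqrt 8 * Real.sqrt (G z + v^2)) * (z^2)⁻¹ :=
            mul_le_mul_of_nonneg_right h1 (by positivity)
        _ = Real.sqrt 8 * (z^2)⁻¹ * Real.sqrt (G z + v^2) := by ring

private lemma I_strict {G : ℝ → ℝ} {v w : ℝ}
    (hfi : IntegrableOn (fun z => 1 / Real.sqrt (G z + v^2)) (Ioi 0))
    (hgi : IntegrableOn (fun z => 1 / Real.sqrt (G z + w^2)) (Ioi 0))
    (hv : 0 < v) (hvw : v < w)
    (hposv : ∀ z ≥ (0:ℝ), G z + v^2 > 0) :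
    (∫ z in Ioi (0:ℝ), 1 / Real.sqrt (G z + w^2)) <
      ∫ z in Ioi (0:ℝ), 1 / Real.sqrt (G z + v^2) := by
  set F : ℝ → ℝ := fun z => 1 / Real.sqrt (G z + v^2) - 1 / Real.sqrt (G z + w^2) with hF
  have key : ∀ z ∈ Ioi (0:ℝ), 0 < F z := by
    intro z hz
    have h1 : 0 < G z + v^2 := hposv z (le_of_lt hz)
    have h2 : G z + v^2 < G z + w^2 := by nlinarith
    have s1 : 0 < Real.sqrt (G z + v^2) := Real.sqrt_pos.2 h1
    have s2 : Real.sqrt (G z + v^2) < Real.sqrt (G z + w^2) := Real.sqrt_lt_sqrt h1.le h2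
    have := one_div_lt_one_div_of_lt s1 s2
    simp only [hF]; linarith
  have hsub : IntegrableOn F (Ioi 0) := hfi.sub hgi
  have hpos : 0 < ∫ z in Ioi (0:ℝ), F z := by
    have hnn : 0 ≤ᶠ[ae (volume.restrict (Ioi (0:ℝ)))] F := by
      rw [EventuallyLE, ae_restrict_iff' measurableSet_Ioi]
      exact Filter.Eventually.of_forall fun z hz => (key z hz).le
    rw [setIntegral_pos_iff_support_of_nonneg_ae hnn hsub]
    refine lt_of_lt_of_le ?_ (measure_mono (fun z hz => ⟨ne_of_gt (key z hz), hz⟩ :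
      Ioi (0:ℝ) ⊆ Function.support F ∩ Ioi 0))
    rw [Real.volume_Ioi]
    exact ENNReal.zero_lt_top
  simp only [hF] at hpos
  rw [integral_sub hfi hgi] at hpos
  linarith

private lemma I_taylor (hη : 0 ≤ η)
    (hG : ∀ z, G z = (1/4)*z^4 + 2*η*z^3 + 4*η^2*z^2 - z^2)
    {a : ℝ} (ha : 0 ≤ a) (hd : a^3 + 6*η*a^2 + 8*η^2*a - 2*a = 0) :
    ∃ C, 0 < C ∧ ∀ t ∈ Icc (0:ℝ) 1, G (a+t) - G a ≤ C * t^2 := by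
  refine ⟨(3/2)*a^2 + 6*η*a + 4*η^2 + a + 2*η + 1/4, by positivity, fun t ht => ?_⟩
  obtain ⟨ht0, ht1⟩ := ht
  have key : G (a+t) - G a = ((3/2)*a^2 + 6*η*a + 4*η^2 - 1)*t^2 + (a + 2*η)*t^3 + (1/4)*t^4 := by
    rw [hG, hG]
    linear_combination t * hd
  rw [key]
  have h3 : t^3 ≤ t^2 := pow_le_pow_of_le_one ht0 ht1 (by norm_num)
  have h4 : t^4 ≤ t^2 := pow_le_pow_of_le_one ht0 ht1 (by norm_num)
  have hc3 : 0 ≤ a + 2*η := by linarith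
  nlinarith [mul_le_mul_of_nonneg_left h3 hc3, sq_nonneg t]

private lemma I_exists_structure (hη : 0 ≤ η)
    (hG : ∀ z, G z = (1/4)*z^4 + 2*η*z^3 + 4*η^2*z^2 - z^2)
    {A : Set ℝ} (hA : A = {v : ℝ | 0 < v ∧ ∀ z ≥ (0:ℝ), G z + v^2 > 0}) :
    ∃ a v₀ : ℝ, 0 ≤ a ∧ 0 ≤ v₀ ∧ G a + v₀^2 = 0 ∧ (∀ z ≥ (0:ℝ), 0 ≤ G z + v₀^2) ∧
      A = Ioi v₀ ∧ (a^3 + 6*η*a^2 + 8*η^2*a - 2*a = 0) := by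
  have hGc : Continuous G := I_contG hG
  rcases le_or_gt (1/2 : ℝ) η with hcase | hcase
  · have hGnn : ∀ z : ℝ, 0 ≤ z → 0 ≤ G z := by
      intro z hz
      rw [hG]
      have hQ : 0 ≤ 4*η^2 - 1 := by nlinarith
      have h1 : 0 ≤ z^2*(4*η^2-1) := mul_nonneg (sq_nonneg z) hQ
      have h2 : 0 ≤ η*z^3 := mul_nonneg hη (pow_nonneg hz 3)
      have h3 : 0 ≤ z^4 := pow_nonneg hz 4
      nlinarith [h1, h2, h3]
    refine ⟨0, 0, le_refl _, le_refl _, by simp [hG 0], fun z hz => ?_, ?_, by ring⟩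
    · have := hGnn z hz; nlinarith
    · rw [hA]; ext v
      simp only [mem_setOf_eq, mem_Ioi]
      constructor
      · exact fun h => h.1
      · intro hv
        refine ⟨hv, fun z hz => ?_⟩
        have := hGnn z hz
        nlinarith
  · obtain ⟨a, haI, hamin⟩ := (isCompact_Icc (a := (0:ℝ)) (b := 2)).exists_isMinOn
      (nonempty_Icc.2 (by norm_num)) hGc.continuousOn
    rw [isMinOn_iff] at hamin
    set z₁ : ℝ := min 1 (2*(1-4*η^2)/(1+8*η)) with hz₁
    have hz₁pos : 0 < z₁ := by
      apply lt_min one_pos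
      apply div_pos (by nlinarith) (by linarith)
    have hz₁le1 : z₁ ≤ 1 := min_le_left _ _
    have hz₁le : z₁ ≤ 2*(1-4*η^2)/(1+8*η) := min_le_right _ _
    have hz₁le' : z₁ * (1+8*η) ≤ 2*(1-4*η^2) := by
      rw [← le_div_iff₀ (by linarith : (0:ℝ) < 1+8*η)]
      exact hz₁le
    have hGz₁ : G z₁ < 0 := by
      have hQneg : z₁^2/4 + 2*η*z₁ + 4*η^2 - 1 < 0 := by
        nlinarith [mul_pos hz₁pos hz₁pos, mul_nonneg hη hz₁pos.le]
      have hneg := mul_neg_of_pos_of_neg (mul_pos hz₁pos hz₁pos) hQneg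
      rw [hG]
      nlinarith [hneg]
    have hGa_neg : G a < 0 := lt_of_le_of_lt (hamin z₁ ⟨hz₁pos.le, by linarith⟩) hGz₁
    have hglob : ∀ z ≥ (0:ℝ), G a ≤ G z := by
      intro z hz
      rcases le_or_gt z 2 with h2 | h2
      · exact hamin z ⟨hz, h2⟩
      · have : 0 ≤ G z := by
          rw [hG]
          have h1 : 0 ≤ z^2*(z^2-4) := mul_nonneg (sq_nonneg z) (by nlinarith)
          have h2' : 0 ≤ η*z^3 := mul_nonneg hη (pow_nonneg hz 3)
          have h3 : 0 ≤ η^2*z^2 := mul_nonneg (sq_nonneg η) (sq_nonneg z)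
          nlinarith [h1, h2', h3]
        linarith
    set v₀ : ℝ := Real.sqrt (-G a) with hv₀
    have hv₀pos : 0 < v₀ := Real.sqrt_pos.2 (by linarith)
    have hv₀sq : v₀^2 = -G a := Real.sq_sqrt (by linarith)
    have ha0 : 0 < a := by
      rcases eq_or_lt_of_le haI.1 with h | h
      · exfalso; rw [← h] at hGa_neg; rw [hG] at hGa_neg; norm_num at hGa_neg
      · exact h
    have ha2 : a < 2 := by
      rcases eq_or_lt_of_le haI.2 with h | h
      · exfalso
        have h2 : G 2 = 16*η + 16*η^2 := by rw [hG]; ring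
        rw [h, h2] at hGa_neg; nlinarith
      · exact h
    have hderiv : a^3 + 6*η*a^2 + 8*η^2*a - 2*a = 0 := by
      have hmin' : IsMinOn G (Icc (0:ℝ) 2) a := by
        rw [isMinOn_iff]; exact hamin
      have hloc : IsLocalMin G a := hmin'.isLocalMin (Icc_mem_nhds ha0 ha2)
      have hder : HasDerivAt G (a^3 + 6*η*a^2 + 8*η^2*a - 2*a) a := by
        have hGfun : G = fun z => (1/4)*z^4 + 2*η*z^3 + 4*η^2*z^2 - z^2 := funext hG
        rw [hGfun]
        have h4 := hasDerivAt_pow 4 a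
        have h3 := hasDerivAt_pow 3 a
        have h2 := hasDerivAt_pow 2 a
        have H := (((h4.const_mul (1/4:ℝ)).add (h3.const_mul (2*η))).add
          (h2.const_mul (4*η^2))).sub h2
        convert H using 1
        · rfl
        · rfl
        · rfl
        push_cast
        ring
      have := hloc.deriv_eq_zero
      rw [hder.deriv] at this
      exact this
    refine ⟨a, v₀, ha0.le, hv₀pos.le, by rw [hv₀sq]; ring, fun z hz => ?_, ?_, hderiv⟩
    · have := hglob z hz; rw [hv₀sq]; linarith
    · rw [hA]; ext v
      simp only [mem_setOf_eq, mem_Ioi]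
      constructor
      · rintro ⟨hv, hall⟩
        have := hall a ha0.le
        have hlt : v₀^2 < v^2 := by rw [hv₀sq]; linarith
        nlinarith
      · intro hv
        have hv0 : 0 < v := lt_of_le_of_lt hv₀pos.le hv
        refine ⟨hv0, fun z hz => ?_⟩
        have h1 := hglob z hz
        have h2 : v₀^2 < v^2 := by nlinarith
        rw [hv₀sq] at h2
        linarith

private lemma I_div {G : ℝ → ℝ} {a v₀ C : ℝ} (ha0 : 0 ≤ a) (hv₀0 : 0 ≤ v₀) (hCpos : 0 < C)
    (hfi : ∀ v ∈ Ioi v₀, IntegrableOn (fun z => 1 / Real.sqrt (G z + v^2)) (Ioi 0))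
    (hposv : ∀ v ∈ Ioi v₀, ∀ z ≥ (0:ℝ), G z + v^2 > 0)
    (hquad : ∀ t ∈ Icc (0:ℝ) 1, G (a+t) + v₀^2 ≤ C*t^2) :
    Tendsto (fun v => ∫ z in Ioi (0:ℝ), 1 / Real.sqrt (G z + v^2))
      (nhdsWithin v₀ (Ioi v₀)) atTop := by
  set c : ℝ := Real.sqrt (C+1) with hc
  have hcpos : 0 < c := Real.sqrt_pos.2 (by linarith)
  set g : ℝ → ℝ := fun v => -Real.log (Real.sqrt (v^2 - v₀^2)) / c with hg
  have hgtop : Tendsto g (nhdsWithin v₀ (Ioi v₀)) atTop := by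
    have h1 : Tendsto (fun v => v^2 - v₀^2) (nhdsWithin v₀ (Ioi v₀)) (nhdsWithin 0 (Ioi 0)) := by
      rw [tendsto_nhdsWithin_iff]
      constructor
      · have : Tendsto (fun v : ℝ => v^2 - v₀^2) (nhds v₀) (nhds (v₀^2 - v₀^2)) :=
          ((continuous_pow 2).sub continuous_const).tendsto v₀
        simpa using this.mono_left nhdsWithin_le_nhds
      · filter_upwards [eventually_mem_nhdsWithin] with v hv
        have h : v₀ < v := hv
        have : 0 < v^2 - v₀^2 := by nlinarith
        exact this
    have h2 : Tendsto Real.sqrt (nhdsWithin 0 (Ioi 0)) (nhdsWithin 0 (Ioi 0)) := by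
      rw [tendsto_nhdsWithin_iff]
      constructor
      · have : Tendsto Real.sqrt (nhds 0) (nhds (Real.sqrt 0)) :=
          Real.continuous_sqrt.tendsto 0
        simpa using this.mono_left nhdsWithin_le_nhds
      · filter_upwards [eventually_mem_nhdsWithin] with x hx
        exact Real.sqrt_pos.2 hx
    have h3 : Tendsto (fun v => Real.log (Real.sqrt (v^2 - v₀^2)))
        (nhdsWithin v₀ (Ioi v₀)) atBot :=
      Real.tendsto_log_nhdsGT_zero.comp (h2.comp h1)
    have h4 : Tendsto (fun v => -Real.log (Real.sqrt (v^2 - v₀^2)))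
        (nhdsWithin v₀ (Ioi v₀)) atTop := tendsto_neg_atTop_iff.mpr h3
    exact h4.atTop_div_const hcpos
  refine tendsto_atTop_mono' _ ?_ hgtop
  have hev : ∀ᶠ v in nhdsWithin v₀ (Ioi v₀), v^2 < v₀^2 + 1 := by
    apply eventually_nhdsWithin_of_eventually_nhds
    have hca : ContinuousAt (fun v : ℝ => v^2) v₀ := (continuous_pow 2).continuousAt
    have h := hca.eventually_lt continuousAt_const (by nlinarith : (v₀:ℝ)^2 < v₀^2 + 1)
    simpa using h
  filter_upwards [hev, eventually_mem_nhdsWithin] with v hv1 hvmem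
  have hvgt : v₀ < v := hvmem
  set ε : ℝ := Real.sqrt (v^2 - v₀^2) with hεdef
  have hvsq : v₀^2 < v^2 := by nlinarith
  have hεpos : 0 < ε := Real.sqrt_pos.2 (by linarith)
  have hε2 : ε^2 = v^2 - v₀^2 := Real.sq_sqrt (by linarith)
  have hε1 : ε ≤ 1 := by nlinarith
  have hsub : Ioc (a+ε) (a+1) ⊆ Ioi (0:ℝ) := by
    intro z hz
    have := hz.1
    simp only [mem_Ioi]
    linarith
  have hbound : ∀ z ∈ Ioc (a+ε) (a+1), (c*(z-a))⁻¹ ≤ 1 / Real.sqrt (G z + v^2) := by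
    intro z hz
    obtain ⟨hz1, hz2⟩ := hz
    have htpos : ε < z - a := by linarith
    have ht1 : z - a ≤ 1 := by linarith
    have hq := hquad (z-a) ⟨by linarith, ht1⟩
    rw [show a + (z-a) = z by ring] at hq
    have hzpos : (0:ℝ) < z := by linarith
    have hGv : 0 < G z + v^2 := hposv v hvgt z hzpos.le
    have hle : G z + v^2 ≤ (C+1)*(z-a)^2 := by nlinarith
    have hsq : Real.sqrt (G z + v^2) ≤ c * (z-a) := by
      have h1 : Real.sqrt (G z + v^2) ≤ Real.sqrt ((C+1)*(z-a)^2) := Real.sqrt_le_sqrt hle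
      rwa [Real.sqrt_mul (by linarith), Real.sqrt_sq (by linarith)] at h1
    have := one_div_le_one_div_of_le (Real.sqrt_pos.2 hGv) hsq
    calc (c*(z-a))⁻¹ = 1/(c*(z-a)) := (one_div _).symm
      _ ≤ 1 / Real.sqrt (G z + v^2) := this
  have I1 : IntegrableOn (fun z => 1 / Real.sqrt (G z + v^2)) (Ioc (a+ε) (a+1)) :=
    (hfi v hvgt).mono_set hsub
  have I2 : IntegrableOn (fun z => (c*(z-a))⁻¹) (Ioc (a+ε) (a+1)) := by
    have hcont : ContinuousOn (fun z => (c*(z-a))⁻¹) (Icc (a+ε) (a+1)) := by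
      apply ContinuousOn.inv₀
      · exact (continuous_const.mul (continuous_id.sub continuous_const)).continuousOn
      · intro z hz
        have h1 : a + ε ≤ z := hz.1
        have h2 : 0 < z - a := by linarith
        positivity
    exact hcont.integrableOn_Icc.mono_set Ioc_subset_Icc_self
  have stepA : (∫ z in Ioc (a+ε) (a+1), (c*(z-a))⁻¹) ≤
      ∫ z in Ioc (a+ε) (a+1), 1 / Real.sqrt (G z + v^2) :=
    setIntegral_mono_on I2 I1 measurableSet_Ioc hbound
  have stepB : (∫ z in Ioc (a+ε) (a+1), 1 / Real.sqrt (G z + v^2)) ≤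
      ∫ z in Ioi (0:ℝ), 1 / Real.sqrt (G z + v^2) := by
    apply setIntegral_mono_set (hfi v hvgt) ?_ (HasSubset.Subset.eventuallyLE hsub)
    rw [EventuallyLE, ae_restrict_iff' measurableSet_Ioi]
    exact Filter.Eventually.of_forall fun z _ => by positivity
  have stepC : (∫ z in Ioc (a+ε) (a+1), (c*(z-a))⁻¹) = g v := by
    have h1 : (∫ z in Ioc (a+ε) (a+1), (c*(z-a))⁻¹) =
        ∫ z in (a+ε)..(a+1), (c*(z-a))⁻¹ :=
      (intervalIntegral.integral_of_le (by linarith)).symm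
    rw [h1]
    have h2 : (fun z : ℝ => (c*(z-a))⁻¹) = fun z => c⁻¹ * (z-a)⁻¹ := by
      funext z; rw [mul_inv]
    rw [h2]
    rw [intervalIntegral.integral_const_mul]
    have h3 := intervalIntegral.integral_comp_sub_right (a := a+ε) (b := a+1)
      (fun x : ℝ => x⁻¹) a
    rw [show a + ε - a = ε by ring, show a + 1 - a = 1 by ring] at h3
    rw [h3, integral_inv_of_pos hεpos one_pos]
    rw [hg]
    rw [show (1:ℝ)/ε = ε⁻¹ by rw [one_div], Real.log_inv]
    field_simp
    rw [hεdef]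
  rw [hg] at stepC ⊢
  simp only at stepC ⊢
  linarith

private lemma I_zero {G : ℝ → ℝ} (hGc : Continuous G)
    (h2i : IntegrableOn (fun z => 1 / Real.sqrt (G z + 2^2)) (Ioi 0))
    (hpos2 : ∀ z ≥ (0:ℝ), G z + (2:ℝ)^2 > 0) :
    Tendsto (fun v => ∫ z in Ioi (0:ℝ), 1 / Real.sqrt (G z + v^2)) atTop (nhds 0) := by
  have H : Tendsto (fun v => ∫ z in Ioi (0:ℝ), 1 / Real.sqrt (G z + v^2)) atTop
      (nhds (∫ z in Ioi (0:ℝ), (0:ℝ))) := by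
    refine tendsto_integral_filter_of_dominated_convergence
      (fun z => 1 / Real.sqrt (G z + 2^2)) ?_ ?_ h2i ?_
    · refine Filter.Eventually.of_forall fun v => ?_
      have : AEStronglyMeasurable (fun z => (Real.sqrt (G z + v^2))⁻¹)
          (volume.restrict (Ioi (0:ℝ))) :=
        ((Real.continuous_sqrt.comp (hGc.add continuous_const)).measurable.inv).aestronglyMeasurable
      simpa [one_div] using this
    · filter_upwards [eventually_ge_atTop (2:ℝ)] with v hv
      rw [ae_restrict_iff' measurableSet_Ioi]
      refine Filter.Eventually.of_forall fun z hz => ?_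
      rw [Real.norm_of_nonneg (by positivity)]
      have h1 : 0 < G z + 2^2 := hpos2 z (le_of_lt hz)
      have h2 : G z + 2^2 ≤ G z + v^2 := by nlinarith
      exact one_div_le_one_div_of_le (Real.sqrt_pos.2 h1) (Real.sqrt_le_sqrt h2)
    · refine Filter.Eventually.of_forall fun z => ?_
      have hsq : Tendsto Real.sqrt atTop atTop := by
        have h := tendsto_rpow_atTop (by norm_num : (0:ℝ) < 1/2)
        refine h.congr' ?_
        filter_upwards [eventually_ge_atTop (0:ℝ)] with x hx
        exact (Real.sqrt_eq_rpow x).symm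
      have hs : Tendsto (fun v : ℝ => Real.sqrt (G z + v^2)) atTop atTop := by
        apply hsq.comp
        apply tendsto_atTop_add_const_left
        exact tendsto_pow_atTop (two_ne_zero)
      have := hs.inv_tendsto_atTop
      simpa [one_div, Pi.inv_def] using this
  simpa using H

end IHelpers

theorem I_decreasing_and_limits (η : ℝ) (hη : 0 ≤ η)
    (G : ℝ → ℝ) (hG : ∀ z, G z = (1/4) * z^4 + 2*η*z^3 + 4*η^2*z^2 - z^2)
    (A : Set ℝ) (hA : A = {v : ℝ | 0 < v ∧ ∀ z ≥ (0:ℝ), G z + v^2 > 0})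
    (I : ℝ → ℝ)
    (hI : ∀ v, I v = ∫ z in Set.Ioi (0:ℝ), 1 / Real.sqrt (G z + v^2)) :
    StrictAntiOn I A ∧
    Filter.Tendsto I (nhdsWithin (sInf A) A) Filter.atTop ∧
    Filter.Tendsto I Filter.atTop (nhds 0) := by
  have hIfun : I = fun v => ∫ z in Set.Ioi (0:ℝ), 1 / Real.sqrt (G z + v^2) := funext hI
  have hmemA : ∀ v ∈ A, 0 < v ∧ ∀ z ≥ (0:ℝ), G z + v^2 > 0 := by
    intro v hv; rw [hA] at hv; exact hv
  obtain ⟨a, v₀, ha0, hv₀0, hGa, hmin, hAeq, hderiv⟩ := I_exists_structure hη hG hA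
  obtain ⟨C, hCpos, hCt⟩ := I_taylor hη hG ha0 hderiv
  have hquad : ∀ t ∈ Icc (0:ℝ) 1, G (a+t) + v₀^2 ≤ C*t^2 := by
    intro t ht
    have := hCt t ht
    linarith
  have hfiA : ∀ v ∈ A, IntegrableOn (fun z => 1 / Real.sqrt (G z + v^2)) (Ioi 0) :=
    fun v hv => I_integrable_f hη hG (hmemA v hv).2
  refine ⟨?_, ?_, ?_⟩
  · -- strictly decreasing
    intro v hv w hw hvw
    rw [hI v, hI w]
    exact I_strict (hfiA v hv) (hfiA w hw) (hmemA v hv).1 hvw (hmemA v hv).2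
  · -- limit at sInf A
    rw [hIfun, hAeq, csInf_Ioi]
    refine I_div ha0 hv₀0 hCpos ?_ ?_ hquad
    · intro v hv
      apply hfiA
      rw [hAeq]; exact hv
    · intro v hv
      have : v ∈ A := by rw [hAeq]; exact hv
      exact (hmemA v this).2
  · -- limit at infinity
    rw [hIfun]
    have hpos2 : ∀ z ≥ (0:ℝ), G z + (2:ℝ)^2 > 0 := by
      intro z hz
      have := I_G_lb1 hη hG hz
      nlinarith
    exact I_zero (I_contG hG) (I_integrable_f hη hG hpos2) hpos2
end

section
/- Let 0 ≤ η < 1/2, G(z) = (1/4)z⁴ + 2ηz³ + 4η²z² − z², v₀ = √(−G(√(η²+2)−3η)), and for v ∈ (0, v₀) define H(v) = ∫_v^{y(v)} dz/√(G(z)+v²), where y(v) is the smallest positive root of G(z)+v² = 0. Then H is increasing on (0, v₀). -/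
open Set MeasureTheory

namespace HMonoAux

noncomputable def Gp (η z : ℝ) : ℝ := (1/4) * z^4 + 2*η*z^3 + 4*η^2*z^2 - z^2

lemma Gp_cont (η : ℝ) : Continuous (Gp η) := by
  unfold Gp; continuity

variable {η : ℝ}

lemma eta_s (hη0 : 0 ≤ η) (hη : η < 1/2) {s : ℝ} (hs2 : s^2 = η^2+2) (hs0 : 0 < s) :
    η * s < 1 - η^2 := by
  nlinarith [mul_nonneg hη0 hs0.le, sq_nonneg (η*s - (1 - η^2)), sq_nonneg η]

lemma zs_pos (hη0 : 0 ≤ η) (hη : η < 1/2) {s : ℝ} (hs2 : s^2 = η^2+2) (hs0 : 0 < s) :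
    0 < s - 3*η := by
  nlinarith [sq_nonneg η]

lemma Gzs_neg (hη0 : 0 ≤ η) (hη : η < 1/2) {s : ℝ} (hs2 : s^2 = η^2+2) (hs0 : 0 < s) :
    Gp η (s - 3*η) < 0 := by
  have hz := zs_pos hη0 hη hs2 hs0
  have hes := eta_s hη0 hη hs2 hs0
  have hq : (s-3*η)^2/4 + 2*η*(s-3*η) + 4*η^2 - 1 < 0 := by nlinarith
  calc Gp η (s-3*η) = (s-3*η)^2 * ((s-3*η)^2/4 + 2*η*(s-3*η) + 4*η^2 - 1) := by
        unfold Gp; ring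
    _ < 0 := mul_neg_of_pos_of_neg (by positivity) hq

lemma Gp_add_sq_nonneg (hη0 : 0 ≤ η) {z : ℝ} (hz : 0 ≤ z) : 0 ≤ Gp η z + z^2 := by
  unfold Gp
  nlinarith [pow_nonneg hz 4, mul_nonneg hη0 (pow_nonneg hz 3),
    mul_nonneg (mul_nonneg hη0 hη0) (sq_nonneg z)]

lemma Gp_anti (hη0 : 0 ≤ η) (hη : η < 1/2) {s : ℝ} (hs2 : s^2 = η^2+2) (hs0 : 0 < s) :
    StrictAntiOn (Gp η) (Icc 0 (s - 3*η)) := by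
  apply strictAntiOn_of_deriv_neg (convex_Icc _ _) (Gp_cont η).continuousOn
  intro x hx
  rw [interior_Icc] at hx
  have hd : HasDerivAt (Gp η) (x^3 + 6*η*x^2 + (8*η^2-2)*x) x := by
    have h := ((((hasDerivAt_pow 4 x).const_mul ((1:ℝ)/4)).add
      ((hasDerivAt_pow 3 x).const_mul (2*η))).add
      ((hasDerivAt_pow 2 x).const_mul (4*η^2))).sub (hasDerivAt_pow 2 x)
    have e : Gp η = (((fun y => 1/4*y^4) + fun y => 2*η*y^3) + fun y => 4*η^2*y^2) - fun x => x^2 := by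
      funext y; simp only [Gp, Pi.add_apply, Pi.sub_apply]
    rw [e]
    exact h.congr_deriv (by push_cast; ring)
  rw [hd.deriv]
  have h1 : x - (s - 3*η) < 0 := by linarith [hx.2]
  have h2 : 0 < x + 3*η + s := by linarith [hx.1]
  have hq : x^2 + 6*η*x + 8*η^2 - 2 < 0 := by
    nlinarith [mul_neg_of_neg_of_pos h1 h2]
  calc x^3 + 6*η*x^2 + (8*η^2-2)*x = x * (x^2 + 6*η*x + 8*η^2 - 2) := by ring
    _ < 0 := mul_neg_of_pos_of_neg hx.1 hq

lemma facts (hη0 : 0 ≤ η) (hη : η < 1/2) {s v y : ℝ}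
    (hs2 : s^2 = η^2+2) (hs0 : 0 < s)
    (hv0 : 0 < v) (hvs : Gp η (s - 3*η) + v^2 < 0)
    (hy : IsLeast {z : ℝ | 0 < z ∧ Gp η z + v^2 = 0} y) :
    0 < y ∧ Gp η y + v^2 = 0 ∧ v < y ∧
      (∀ z, 0 ≤ z → z < y → 0 < Gp η z + v^2) ∧ y^2 + 6*η*y + 8*η^2 - 2 < 0 := by
  obtain ⟨⟨hy0, hyr⟩, hleast⟩ := hy
  have hzs := zs_pos hη0 hη hs2 hs0
  have hcont : Continuous fun z => Gp η z + v^2 := (Gp_cont η).add continuous_const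
  have hf0 : Gp η 0 + v^2 = v^2 := by simp [Gp]
  have hpos : ∀ z, 0 ≤ z → z < y → 0 < Gp η z + v^2 := by
    intro z hz0 hzy
    by_contra hle
    push_neg at hle
    have h0mem : (0:ℝ) ∈ Icc ((fun z => Gp η z + v^2) z) ((fun z => Gp η z + v^2) 0) := by
      constructor
      · exact hle
      · show (0:ℝ) ≤ Gp η 0 + v^2
        rw [hf0]; positivity
    obtain ⟨c, hcmem, hc⟩ := intermediate_value_Icc' hz0 hcont.continuousOn h0mem
    have hc' : Gp η c + v^2 = 0 := hc
    have hcne : c ≠ 0 := by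
      rintro rfl
      rw [hf0] at hc'
      exact absurd hc' (by positivity)
    have hcpos : 0 < c := hcmem.1.lt_of_ne (Ne.symm hcne)
    have := hleast ⟨hcpos, hc'⟩
    linarith [hcmem.2]
  have hyzs : y < s - 3*η := by
    rcases lt_or_ge y (s - 3*η) with h | h
    · exact h
    rcases h.lt_or_eq with h' | h'
    · exact absurd (hpos _ hzs.le h') (by linarith)
    · rw [h'] at hvs; linarith
  have hanti := Gp_anti hη0 hη hs2 hs0
  have hvzs : v < s - 3*η := by
    have h1 : 0 ≤ Gp η (s-3*η) + (s-3*η)^2 := Gp_add_sq_nonneg hη0 hzs.le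
    nlinarith
  have hGv : 0 < Gp η v + v^2 := by
    unfold Gp
    nlinarith [pow_pos hv0 4, mul_nonneg hη0 (pow_pos hv0 3).le,
      mul_nonneg (mul_nonneg hη0 hη0) (sq_nonneg v)]
  have hvy : v < y := by
    by_contra hle
    push_neg at hle
    rcases hle.lt_or_eq with h | h
    · have := hanti (mem_Icc.mpr ⟨hy0.le, hyzs.le⟩) (mem_Icc.mpr ⟨hv0.le, hvzs.le⟩) h
      linarith
    · rw [h] at hyr; linarith
  have hq : y^2 + 6*η*y + 8*η^2 - 2 < 0 := by
    have h1 : y - (s - 3*η) < 0 := by linarith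
    have h2 : 0 < y + 3*η + s := by linarith
    nlinarith [mul_neg_of_neg_of_pos h1 h2]
  exact ⟨hy0, hyr, hvy, hpos, hq⟩

set_option maxHeartbeats 1000000 in
lemma integ (hη0 : 0 ≤ η) {v y : ℝ} (hv0 : 0 < v) (hy0 : 0 < y)
    (hyr : Gp η y + v^2 = 0)
    (hpos : ∀ z, 0 ≤ z → z < y → 0 < Gp η z + v^2)
    (hq : y^2 + 6*η*y + 8*η^2 - 2 < 0) :
    IntervalIntegrable (fun p => y * (1 / Real.sqrt (Gp η (y*p) + v^2))) volume 0 1 := by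
  set S : ℝ → ℝ := fun p =>
    -((1/4)*y^4*(p^3+p^2+p+1) + 2*η*y^3*(p^2+p+1) + (4*η^2-1)*y^2*(p+1)) with hS
  have hyr' : (1/4)*y^4 + 2*η*y^3 + 4*η^2*y^2 - y^2 + v^2 = 0 := by
    simpa [Gp] using hyr
  have hfac : ∀ p, Gp η (y*p) + v^2 = (1-p) * S p := by
    intro p
    simp only [hS, Gp]
    linear_combination hyr'
  have hScont : Continuous S := by simp only [hS]; continuity
  have hSpos : ∀ p ∈ Icc (0:ℝ) 1, 0 < S p := by
    intro p hp
    rcases hp.2.lt_or_eq with h1 | h1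
    · have h2 : 0 < Gp η (y*p) + v^2 :=
        hpos (y*p) (mul_nonneg hy0.le hp.1) (mul_lt_of_lt_one_right hy0 h1)
      have h3 : 0 < 1 - p := by linarith
      nlinarith [hfac p]
    · have hs1 : S 1 = -(y^2 * (y^2 + 6*η*y + 8*η^2 - 2)) := by
        simp only [hS]; ring
      rw [h1, hs1]
      have := mul_neg_of_pos_of_neg (pow_pos hy0 2) hq
      linarith
  obtain ⟨p₀, hp₀mem, hp₀min⟩ :=
    isCompact_Icc.exists_isMinOn (nonempty_Icc.mpr zero_le_one) hScont.continuousOn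
  set m := S p₀ with hm
  have hm0 : 0 < m := hSpos p₀ hp₀mem
  have hmle : ∀ p ∈ Icc (0:ℝ) 1, m ≤ S p := fun p hp => hp₀min hp
  have hint : IntervalIntegrable (fun p : ℝ => (y / Real.sqrt m) * (1-p) ^ (-(1/2) : ℝ))
      volume 0 1 := by
    have h1 : IntervalIntegrable (fun x : ℝ => x ^ (-(1/2):ℝ)) volume 0 1 :=
      intervalIntegral.intervalIntegrable_rpow' (by norm_num)
    have h2 := h1.comp_sub_left 1
    norm_num at h2
    exact (h2.symm).const_mul _
  apply hint.mono_fun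
  · apply Measurable.aestronglyMeasurable
    apply Measurable.const_mul
    have hc : Continuous fun p => Real.sqrt (Gp η (y*p) + v^2) :=
      Real.continuous_sqrt.comp (((Gp_cont η).comp (continuous_const.mul continuous_id)).add
        continuous_const)
    simpa [one_div] using hc.measurable
  · filter_upwards [ae_restrict_mem measurableSet_uIoc] with p hp
    rw [uIoc_of_le zero_le_one] at hp
    obtain ⟨hp0, hp1⟩ := hp
    have h1p : 0 ≤ 1 - p := by linarith
    have hgn : 0 ≤ y * (1 / Real.sqrt (Gp η (y*p) + v^2)) :=
      mul_nonneg hy0.le (by positivity)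
    have hMn : 0 ≤ (y / Real.sqrt m) * (1-p) ^ (-(1/2):ℝ) :=
      mul_nonneg (div_nonneg hy0.le (Real.sqrt_nonneg m)) (Real.rpow_nonneg h1p _)
    rw [Real.norm_of_nonneg hgn, Real.norm_of_nonneg hMn]
    rcases hp1.lt_or_eq with h1 | h1
    · have hfp : m * (1-p) ≤ Gp η (y*p) + v^2 := by
        have h2 := mul_le_mul_of_nonneg_left (hmle p ⟨hp0.le, hp1⟩) h1p
        rw [hfac p]; nlinarith
      have hmp : 0 < m * (1-p) := mul_pos hm0 (by linarith)
      have hsle : Real.sqrt (m*(1-p)) ≤ Real.sqrt (Gp η (y*p) + v^2) := Real.sqrt_le_sqrt hfp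
      have hspos : 0 < Real.sqrt (m*(1-p)) := Real.sqrt_pos.mpr hmp
      have key : y * (1/Real.sqrt (Gp η (y*p) + v^2)) ≤ y / Real.sqrt (m*(1-p)) := by
        rw [mul_one_div]
        exact div_le_div_of_nonneg_left hy0.le hspos hsle
      have heq : y / Real.sqrt (m*(1-p)) = (y / Real.sqrt m) * (1-p) ^ (-(1/2):ℝ) := by
        rw [Real.rpow_neg h1p, ← Real.sqrt_eq_rpow, Real.sqrt_mul hm0.le,
          div_mul_eq_div_div, div_eq_mul_inv]
      rw [← heq]; exact key
    · have hz : Gp η (y*p) + v^2 = 0 := by rw [h1, mul_one]; exact hyr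
      rw [hz, Real.sqrt_zero, div_zero, mul_zero]
      exact hMn

end HMonoAux

set_option maxHeartbeats 2000000 in
open HMonoAux in
theorem H_monotone (η : ℝ) (hη0 : 0 ≤ η) (hη : η < 1/2)
    (G : ℝ → ℝ) (hG : ∀ z, G z = (1/4) * z^4 + 2*η*z^3 + 4*η^2*z^2 - z^2)
    (v₀ : ℝ) (hv₀ : v₀ = Real.sqrt (-(G (Real.sqrt (η^2 + 2) - 3*η))))
    (yf : ℝ → ℝ)
    (hyf : ∀ v ∈ Set.Ioo (0:ℝ) v₀, IsLeast {z : ℝ | 0 < z ∧ G z + v^2 = 0} (yf v)) :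
    MonotoneOn (fun v => ∫ z in v..(yf v), 1 / Real.sqrt (G z + v^2))
      (Set.Ioo (0:ℝ) v₀) := by
  have hGfun : G = Gp η := by funext z; rw [hG]; rfl
  subst hGfun
  subst hv₀
  set s := Real.sqrt (η^2 + 2) with hsdef
  have hs2 : s^2 = η^2+2 := Real.sq_sqrt (by positivity)
  have hs0 : 0 < s := Real.sqrt_pos.mpr (by positivity)
  have hGzs : Gp η (s - 3*η) < 0 := Gzs_neg hη0 hη hs2 hs0
  have hv0sq : (Real.sqrt (-(Gp η (s - 3*η))))^2 = -(Gp η (s - 3*η)) :=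
    Real.sq_sqrt (by linarith)
  -- substitution identity
  have hsub : ∀ (v y : ℝ), 0 < y →
      (∫ z in v..y, 1 / Real.sqrt (Gp η z + v^2))
        = ∫ p in (v/y)..1, y * (1 / Real.sqrt (Gp η (y*p) + v^2)) := by
    intro v y hy0
    have h := intervalIntegral.smul_integral_comp_mul_left
      (a := v/y) (b := 1) (fun z => 1 / Real.sqrt (Gp η z + v^2)) y
    rw [mul_one, show y * (v/y) = v by field_simp] at h
    rw [intervalIntegral.integral_const_mul, ← smul_eq_mul, h]
  intro v₁ hv₁ v₂ hv₂ h12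
  simp only
  have hvs₁ : Gp η (s - 3*η) + v₁^2 < 0 := by
    have h1 : v₁^2 < (Real.sqrt (-(Gp η (s - 3*η))))^2 := by
      have := hv₁.2
      nlinarith [hv₁.1, Real.sqrt_nonneg (-(Gp η (s - 3*η)))]
    rw [hv0sq] at h1; linarith
  have hvs₂ : Gp η (s - 3*η) + v₂^2 < 0 := by
    have h1 : v₂^2 < (Real.sqrt (-(Gp η (s - 3*η))))^2 := by
      have := hv₂.2
      nlinarith [hv₂.1, Real.sqrt_nonneg (-(Gp η (s - 3*η)))]
    rw [hv0sq] at h1; linarith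
  obtain ⟨hy₁0, hyr₁, hvy₁, hpos₁, hq₁⟩ := facts hη0 hη hs2 hs0 hv₁.1 hvs₁ (hyf v₁ hv₁)
  obtain ⟨hy₂0, hyr₂, hvy₂, hpos₂, hq₂⟩ := facts hη0 hη hs2 hs0 hv₂.1 hvs₂ (hyf v₂ hv₂)
  set y₁ := yf v₁
  set y₂ := yf v₂
  have hyr₁' : (1/4)*y₁^4 + 2*η*y₁^3 + 4*η^2*y₁^2 - y₁^2 + v₁^2 = 0 := by
    simpa [Gp] using hyr₁
  have hyr₂' : (1/4)*y₂^4 + 2*η*y₂^3 + 4*η^2*y₂^2 - y₂^2 + v₂^2 = 0 := by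
    simpa [Gp] using hyr₂
  -- y₁ ≤ y₂
  have hyy : y₁ ≤ y₂ := by
    by_contra hlt
    push_neg at hlt
    have h1 := hpos₁ y₂ hy₂0.le hlt
    have h2 : v₁^2 ≤ v₂^2 := by nlinarith [hv₁.1]
    linarith
  -- lower endpoints
  have ha₁0 : 0 ≤ v₁/y₁ := div_nonneg hv₁.1.le hy₁0.le
  have ha₂0 : 0 ≤ v₂/y₂ := div_nonneg hv₂.1.le hy₂0.le
  have ha₁1 : v₁/y₁ ≤ 1 := (div_le_one hy₁0).mpr hvy₁.le
  have ha₂1 : v₂/y₂ ≤ 1 := (div_le_one hy₂0).mpr hvy₂.le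
  have haa : v₂/y₂ ≤ v₁/y₁ := by
    have e₁ : (v₁/y₁)^2 = 1 - y₁^2/4 - 2*η*y₁ - 4*η^2 := by
      rw [div_pow, div_eq_iff (by positivity)]
      linear_combination hyr₁'
    have e₂ : (v₂/y₂)^2 = 1 - y₂^2/4 - 2*η*y₂ - 4*η^2 := by
      rw [div_pow, div_eq_iff (by positivity)]
      linear_combination hyr₂'
    have hsq : (v₂/y₂)^2 ≤ (v₁/y₁)^2 := by
      rw [e₁, e₂]
      nlinarith [hy₁0]
    calc v₂/y₂ = Real.sqrt ((v₂/y₂)^2) := (Real.sqrt_sq ha₂0).symm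
      _ ≤ Real.sqrt ((v₁/y₁)^2) := Real.sqrt_le_sqrt hsq
      _ = v₁/y₁ := Real.sqrt_sq ha₁0
  -- pointwise inequality on [v₁/y₁, 1]
  have hpt : ∀ p ∈ Icc (v₁/y₁) 1,
      y₁ * (1 / Real.sqrt (Gp η (y₁*p) + v₁^2)) ≤ y₂ * (1 / Real.sqrt (Gp η (y₂*p) + v₂^2)) := by
    intro p hp
    have hp0 : 0 ≤ p := le_trans ha₁0 hp.1
    rcases hp.2.lt_or_eq with h1 | h1
    · have hc₁ : 0 < Gp η (y₁*p) + v₁^2 :=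
        hpos₁ _ (mul_nonneg hy₁0.le hp0) (mul_lt_of_lt_one_right hy₁0 h1)
      have hc₂ : 0 < Gp η (y₂*p) + v₂^2 :=
        hpos₂ _ (mul_nonneg hy₂0.le hp0) (mul_lt_of_lt_one_right hy₂0 h1)
      have hid : y₁^2 * (Gp η (y₂*p) + v₂^2) - y₂^2 * (Gp η (y₁*p) + v₁^2)
          = y₁^2*y₂^2*((1/4)*(p^4-1)*(y₂^2-y₁^2) + 2*η*(p^3-1)*(y₂-y₁)) := by
        simp only [Gp]
        linear_combination y₁^2 * hyr₂' - y₂^2 * hyr₁'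
      have h4 : p^4 ≤ 1 := pow_le_one₀ hp0 h1.le
      have h3 : p^3 ≤ 1 := pow_le_one₀ hp0 h1.le
      have hysq : y₁^2 ≤ y₂^2 := by nlinarith [hy₁0]
      have t1 : (1/4)*(p^4-1)*(y₂^2-y₁^2) ≤ 0 :=
        mul_nonpos_of_nonpos_of_nonneg (by linarith) (by linarith)
      have t2 : 2*η*(p^3-1)*(y₂-y₁) ≤ 0 := by
        have h7 : 0 ≤ η*(1-p^3)*(y₂-y₁) :=
          mul_nonneg (mul_nonneg hη0 (by linarith)) (by linarith)
        nlinarith [h7]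
      have t3 : (0:ℝ) ≤ y₁^2*y₂^2 := by positivity
      have hkey : y₁^2 * (Gp η (y₂*p) + v₂^2) ≤ y₂^2 * (Gp η (y₁*p) + v₁^2) := by
        have h8 := mul_nonpos_of_nonneg_of_nonpos t3 (by linarith :
          (1/4)*(p^4-1)*(y₂^2-y₁^2) + 2*η*(p^3-1)*(y₂-y₁) ≤ 0)
        linarith [hid, h8]
      have hsq₁ : 0 < Real.sqrt (Gp η (y₁*p) + v₁^2) := Real.sqrt_pos.mpr hc₁
      have hsq₂ : 0 < Real.sqrt (Gp η (y₂*p) + v₂^2) := Real.sqrt_pos.mpr hc₂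
      have h5 : y₁ * Real.sqrt (Gp η (y₂*p) + v₂^2) ≤ y₂ * Real.sqrt (Gp η (y₁*p) + v₁^2) := by
        have h6 := Real.sqrt_le_sqrt hkey
        rwa [Real.sqrt_mul (sq_nonneg y₁), Real.sqrt_mul (sq_nonneg y₂),
          Real.sqrt_sq hy₁0.le, Real.sqrt_sq hy₂0.le] at h6
      rw [mul_one_div, mul_one_div, div_le_div_iff₀ hsq₁ hsq₂]
      exact h5
    · have hz : Gp η (y₁*p) + v₁^2 = 0 := by rw [h1, mul_one]; exact hyr₁
      rw [hz, Real.sqrt_zero, div_zero, mul_zero]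
      exact mul_nonneg hy₂0.le (by positivity)
  -- integrability
  have hi₁ := integ hη0 hv₁.1 hy₁0 hyr₁ hpos₁ hq₁
  have hi₂ := integ hη0 hv₂.1 hy₂0 hyr₂ hpos₂ hq₂
  have hmem : ∀ x : ℝ, 0 ≤ x → x ≤ 1 → x ∈ uIcc (0:ℝ) 1 := by
    intro x h1 h2
    rw [uIcc_of_le zero_le_one]
    exact ⟨h1, h2⟩
  have int₁ : IntervalIntegrable (fun p => y₁ * (1 / Real.sqrt (Gp η (y₁*p) + v₁^2)))
      volume (v₁/y₁) 1 :=
    hi₁.mono_set (uIcc_subset_uIcc (hmem _ ha₁0 ha₁1) (hmem 1 zero_le_one le_rfl))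
  have int₂b : IntervalIntegrable (fun p => y₂ * (1 / Real.sqrt (Gp η (y₂*p) + v₂^2)))
      volume (v₁/y₁) 1 :=
    hi₂.mono_set (uIcc_subset_uIcc (hmem _ ha₁0 ha₁1) (hmem 1 zero_le_one le_rfl))
  have int₂a : IntervalIntegrable (fun p => y₂ * (1 / Real.sqrt (Gp η (y₂*p) + v₂^2)))
      volume (v₂/y₂) (v₁/y₁) :=
    hi₂.mono_set (uIcc_subset_uIcc (hmem _ ha₂0 ha₂1) (hmem _ ha₁0 ha₁1))
  calc (∫ z in v₁..y₁, 1 / Real.sqrt (Gp η z + v₁^2))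
      = ∫ p in (v₁/y₁)..1, y₁ * (1 / Real.sqrt (Gp η (y₁*p) + v₁^2)) := hsub v₁ y₁ hy₁0
    _ ≤ ∫ p in (v₁/y₁)..1, y₂ * (1 / Real.sqrt (Gp η (y₂*p) + v₂^2)) :=
        intervalIntegral.integral_mono_on ha₁1 int₁ int₂b hpt
    _ ≤ (∫ p in (v₂/y₂)..(v₁/y₁), y₂ * (1 / Real.sqrt (Gp η (y₂*p) + v₂^2)))
          + ∫ p in (v₁/y₁)..1, y₂ * (1 / Real.sqrt (Gp η (y₂*p) + v₂^2)) := by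
        have h0 : 0 ≤ ∫ p in (v₂/y₂)..(v₁/y₁), y₂ * (1 / Real.sqrt (Gp η (y₂*p) + v₂^2)) :=
          intervalIntegral.integral_nonneg haa
            (fun u _ => mul_nonneg hy₂0.le (by positivity))
        linarith
    _ = ∫ p in (v₂/y₂)..1, y₂ * (1 / Real.sqrt (Gp η (y₂*p) + v₂^2)) :=
        intervalIntegral.integral_add_adjacent_intervals int₂a int₂b
    _ = ∫ z in v₂..y₂, 1 / Real.sqrt (Gp η z + v₂^2) := (hsub v₂ y₂ hy₂0).symm
end
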